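/- arXiv:1407.3452 — 5 statements merged into one kernel-verified Lean document; each statement's English description precedes it below -/
import Mathlib

section
/- For noncrossing partitions p ∈ NC(k,l), r ∈ NC(l,m), s ∈ NC(m,v), the number of cycles arising in vertical composition satisfies cy(p, s∘r) = cy(p,r) + cy(r∘p, s) - cy(r,s). -/
open scoped Classical

/-- The `k` upper and `l` lower points of a partition diagram. -/
abbrev Pt (k l : ℕ) := Sum (Fin k) (Fin l)

/-- Position of a point on the boundary circle: upper points left to right,
then lower points right to left. -/
def ptIdx {k l : ℕ} : Pt k l → ℕ :=
  Sum.elim (fun i => (i : ℕ)) (fun j => k + (l - 1 - (j : ℕ)))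

/-- A partition of the `k + l` points (a setoid) is noncrossing if whenever
`a < b < x < y` in the circular order, `a ∼ x` and `b ∼ y` imply `a ∼ b`. -/
def Noncrossing {k l : ℕ} (p : Setoid (Pt k l)) : Prop :=
  ∀ a b x y : Pt k l, ptIdx a < ptIdx b → ptIdx b < ptIdx x → ptIdx x < ptIdx y →
    p.r a x → p.r b y → p.r a b

/-- `b(p)`: number of blocks of a partition. -/
noncomputable def blocks {α : Type*} (p : Setoid α) : ℕ := Nat.card (Quotient p)

/-- The three rows of points appearing in a vertical composition. -/
abbrev X3 (k l w : ℕ) := Sum (Fin k) (Sum (Fin l) (Fin w))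

def upEmb {k l w : ℕ} : Pt k l → X3 k l w := Sum.map id Sum.inl
def loEmb {k l w : ℕ} : Pt l w → X3 k l w := Sum.inr
def outEmb {k l w : ℕ} : Pt k w → X3 k l w := Sum.map id Sum.inr

/-- The partition of the three rows generated by `p` on the two upper rows and
`q` on the two lower rows. -/
def jointSetoid {k l w : ℕ} (p : Setoid (Pt k l)) (q : Setoid (Pt l w)) :
    Setoid (X3 k l w) :=
  Relation.EqvGen.setoid (fun x y =>
    (∃ a b, p.r a b ∧ x = upEmb a ∧ y = upEmb b) ∨
    (∃ a b, q.r a b ∧ x = loEmb a ∧ y = loEmb b))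

/-- Vertical composition `q ∘ p ∈ NC(k,w)` of `p ∈ NC(k,l)` and `q ∈ NC(l,w)`. -/
def compPart {k l w : ℕ} (p : Setoid (Pt k l)) (q : Setoid (Pt l w)) : Setoid (Pt k w) :=
  Setoid.comap outEmb (jointSetoid p q)

/-- `cb(p,q)`: the number of central blocks removed in the composition, i.e. blocks of
the joint partition consisting only of middle points. -/
noncomputable def cb {k l w : ℕ} (p : Setoid (Pt k l)) (q : Setoid (Pt l w)) : ℕ :=
  Nat.card {cls : Quotient (jointSetoid p q) //
    ∀ x : X3 k l w, Quotient.mk (jointSetoid p q) x = cls → ∃ j : Fin l, x = Sum.inr (Sum.inl j)}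

/-- `cy(p,q) = l + b(qp) + cb(p,q) - b(p) - b(q)`: the number of cycles removed. -/
noncomputable def cy {k l w : ℕ} (p : Setoid (Pt k l)) (q : Setoid (Pt l w)) : ℤ :=
  (l : ℤ) + blocks (compPart p q) + cb p q - blocks p - blocks q

/-!
Glue `p`, `r` and `s` into one partition of the four rows `k, l, m, v`. Forgetting row `l`
leaves the joint partition of `r ∘ p` and `s`: a path between the other rows can only dip into
row `l` through a block of the joint partition of `p` and `r`, since `s` does not touch row `l`.
The blocks lost are those lying entirely in row `l`, which are the central blocks of `(p, r)`.
Forgetting row `m` instead leaves the joint partition of `p` and `s ∘ r` and loses the central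
blocks of `(r, s)`. Hence `b(joint(r∘p, s)) + cb(p, r) = b(joint(p, s∘r)) + cb(r, s)`, and with
`b(joint(p, q)) = b(q∘p) + cb(p, q)` the identity becomes linear arithmetic.
-/

open Function Set

namespace Setoid

variable {α β γ δ : Type*}

theorem map_le_iff_le_comap {r : Setoid α} {f : α → β} {s : Setoid β} :
    r.map f ≤ s ↔ r ≤ s.comap f :=
  ⟨fun h => le_comap_map.trans fun _ _ hxy => h hxy,
    fun h => eqvGen_le fun _ _ ⟨_, _, hab, ha, hb⟩ => ha ▸ hb ▸ h hab⟩

theorem gc_map_comap (f : α → β) : GaloisConnection (map · f) (comap f) :=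
  fun _ _ => map_le_iff_le_comap

theorem map_sup (r s : Setoid α) (f : α → β) : (r ⊔ s).map f = r.map f ⊔ s.map f :=
  (gc_map_comap f).l_sup

theorem map_map (r : Setoid α) (f : α → β) (g : β → γ) : (r.map f).map g = r.map (g ∘ f) :=
  ((gc_map_comap f).compose (gc_map_comap g)).l_unique (gc_map_comap (g ∘ f)) fun _ => rfl

theorem map_rel_of_injective {r : Setoid α} {f : α → β} (hf : Injective f) {x y : β}
    (h : r.map f x y) : x = y ∨ ∃ a b, r a b ∧ f a = x ∧ f b = y := by
  rw [coe_map_of_ker_le r f (ker_eq_bot_iff.2 hf ▸ bot_le)] at h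
  exact h.symm

theorem card_quotient_eq_card_comap_add [Finite β] (E : Setoid β) (f : α → β) :
    Nat.card (Quotient E) = Nat.card (Quotient (E.comap f)) +
      Nat.card {c : Quotient E // ∀ d, Quotient.mk E d = c → d ∉ range f} := by
  rw [Nat.card_congr (comapQuotientEquiv f E), ← Nat.card_sum]
  refine Nat.card_congr ((Equiv.sumCompl (· ∈ range (Quotient.mk'' ∘ f))).symm.trans
    (Equiv.sumCongr (Equiv.refl _) (Equiv.subtypeEquivRight fun c => ?_)))
  simp only [mem_range, comp_apply, not_exists]
  exact ⟨fun h d hd a ha => h a (ha ▸ hd), fun h a ha => h _ ha a rfl⟩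

section Sup

variable {R T Q : Setoid δ} {V : Set δ}

/- Since `T` is trivial off `V`, an `(R ⊔ T)`-path leaves `V` only through `R`-steps, and
consecutive `R`-steps merge by transitivity. -/
theorem sup_rel_cases (hT : ∀ d e, T d e → d ∉ V → d = e)
    (hRQ : ∀ d ∈ V, ∀ e ∈ V, R d e → Q d e) (hTQ : T ≤ Q) {d e : δ} (h : (R ⊔ T) d e) :
    R d e ∨ ∃ d' ∈ V, ∃ e' ∈ V, R d d' ∧ R e e' ∧ Q d' e' := by
  rw [sup_eq_eqvGen] at h
  induction h with
  | rel d e h =>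
    rcases h with h | h
    · exact .inl h
    by_cases hd : d ∈ V
    · have he : e ∈ V := of_not_not fun he => (hT e d (T.symm' h) he ▸ he) hd
      exact .inr ⟨d, hd, e, he, R.refl' d, R.refl' e, hTQ h⟩
    · exact .inl (hT d e h hd ▸ R.refl' d)
  | refl d => exact .inl (R.refl' d)
  | symm d e _ ih =>
    rcases ih with h | ⟨d', hd', e', he', hdd, hee, hQ⟩
    · exact .inl (R.symm' h)
    · exact .inr ⟨e', he', d', hd', hee, hdd, Q.symm' hQ⟩
  | trans d e f _ _ ih₁ ih₂ =>
    rcases ih₁ with h₁ | ⟨d', hd', e', he', hdd, hee, hQ₁⟩ <;>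
      rcases ih₂ with h₂ | ⟨e'', he'', f', hf', hee', hff, hQ₂⟩
    · exact .inl (R.trans' h₁ h₂)
    · exact .inr ⟨e'', he'', f', hf', R.trans' h₁ hee', hff, hQ₂⟩
    · exact .inr ⟨d', hd', e', he', hdd, R.trans' (R.symm' h₂) hee, hQ₁⟩
    · have hQ : Q e' e'' := hRQ e' he' e'' he'' (R.trans' (R.symm' hee) hee')
      exact .inr ⟨d', hd', f', hf', hdd, hff, Q.trans' hQ₁ (Q.trans' hQ hQ₂)⟩

theorem sup_rel_of_mem (hT : ∀ d e, T d e → d ∉ V → d = e)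
    (hRQ : ∀ d ∈ V, ∀ e ∈ V, R d e → Q d e) (hTQ : T ≤ Q) {d e : δ} (hd : d ∈ V) (he : e ∈ V)
    (h : (R ⊔ T) d e) : Q d e := by
  rcases sup_rel_cases hT hRQ hTQ h with h | ⟨d', hd', e', he', hdd, hee, hQ⟩
  · exact hRQ d hd e he h
  · exact Q.trans' (hRQ d hd d' hd' hdd) (Q.trans' hQ (Q.symm' (hRQ e he e' he' hee)))

theorem sup_rel_of_forall_notMem (hT : ∀ d e, T d e → d ∉ V → d = e) {d e : δ}
    (hd : ∀ e, R d e → e ∉ V) (h : (R ⊔ T) d e) : R d e :=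
  (sup_rel_cases (Q := R ⊔ T) hT (fun _ _ _ _ h => (le_sup_left : R ≤ R ⊔ T) h) le_sup_right
    h).resolve_right fun ⟨d', hd', _, _, hdd, _⟩ => hd d' hdd hd'

end Sup

section Gluing

/- In the application `δ` is four rows, `i` embeds the three rows other than the hidden one, `j`
the three rows containing it, and `o`, `u` embed the two rows these share. -/
variable {C : Setoid γ} {S : Setoid α} {j : γ → δ} {i : α → δ} {o : β → γ} {u : β → α}

theorem comap_map_sup_map (hi : Injective i) (hj : Injective j) (hcomm : ∀ c, j (o c) = i (u c))
    (hrange : ∀ g a, j g = i a → ∃ c, o c = g) :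
    (C.map j ⊔ S.map i).comap i = (C.comap o).map u ⊔ S := by
  set Q := (C.comap o).map u ⊔ S
  have hC : ∀ a b, C.map j (i a) (i b) → Q a b := by
    intro a b h
    rcases map_rel_of_injective hj h with hab | ⟨g, g', hgg', hg, hg'⟩
    · exact hi hab ▸ Q.refl' a
    obtain ⟨c, rfl⟩ := hrange g a hg
    obtain ⟨c', rfl⟩ := hrange g' b hg'
    rw [hcomm, hi.eq_iff] at hg hg'
    subst hg hg'
    exact (le_sup_left : _ ≤ Q) (le_comap_map (f := u) hgg')
  apply le_antisymm
  · intro a b h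
    suffices (Q.map i).comap i a b from (comap_map_eq i Q hi).le this
    show Q.map i (i a) (i b)
    refine sup_rel_of_mem (V := range i) ?_ ?_ ?_ ⟨a, rfl⟩ ⟨b, rfl⟩ h
    · intro d e hde hd
      exact (map_rel_of_injective hi hde).resolve_right fun ⟨a, _, _, ha, _⟩ => hd ⟨a, ha⟩
    · rintro _ ⟨a, rfl⟩ _ ⟨b, rfl⟩ h
      exact le_comap_map (hC a b h)
    · exact (gc_map_comap i).monotone_l le_sup_right
  · refine sup_le (map_le_iff_le_comap.2 fun c c' h => ?_) (map_le_iff_le_comap.1 le_sup_right)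
    show (C.map j ⊔ S.map i) (i (u c)) (i (u c'))
    rw [← hcomm, ← hcomm]
    exact (le_sup_left : C.map j ≤ _) (le_comap_map h)

theorem card_classes_disjoint_range_map_sup (hi : Injective i) (hj : Injective j)
    (hcomm : ∀ c, j (o c) = i (u c)) (hrange : ∀ g a, j g = i a → ∃ c, o c = g)
    (hcover : ∀ d, d ∉ range i → d ∈ range j) :
    Nat.card {c : Quotient (C.map j ⊔ S.map i) // ∀ d, Quotient.mk _ d = c → d ∉ range i} =
      Nat.card {c : Quotient C // ∀ g, Quotient.mk C g = c → g ∉ range o} := by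
  set E := C.map j ⊔ S.map i
  have hT : ∀ d e, S.map i d e → d ∉ range i → d = e := fun d e hde hd =>
    (map_rel_of_injective hi hde).resolve_right fun ⟨a, _, _, ha, _⟩ => hd ⟨a, ha⟩
  have hCj : ∀ g e, C.map j (j g) e → ∃ g', C g g' ∧ j g' = e := fun g e h =>
    (map_rel_of_injective hj h).elim (fun h => ⟨g, C.refl' g, h⟩)
      fun ⟨_, g', h, hg, hg'⟩ => ⟨g', hj hg ▸ h, hg'⟩
  have hEj : ∀ g, (∀ g', C g g' → g' ∉ range o) → ∀ e, E (j g) e → ∃ g', C g g' ∧ j g' = e := by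
    refine fun g hg e h => hCj g e (sup_rel_of_forall_notMem hT ?_ h)
    rintro _ hge ⟨a, rfl⟩
    obtain ⟨g', hgg', hg'⟩ := hCj g _ hge
    exact hg g' hgg' (hrange g' a hg')
  let Φ : Quotient C → Quotient E :=
    Quotient.map' j fun _ _ h => (le_sup_left : _ ≤ E) (le_comap_map h)
  refine (Nat.card_congr (Set.BijOn.equiv Φ (s := {c | ∀ g, Quotient.mk C g = c → g ∉ range o})
    (t := {c | ∀ d, Quotient.mk E d = c → d ∉ range i}) ⟨?_, ?_, ?_⟩)).symm
  · refine Quotient.ind fun g hg d hd => ?_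
    have hg' : ∀ g', C g g' → g' ∉ range o := fun g' h => hg g' (Quotient.sound (C.symm' h))
    obtain ⟨g', hgg', rfl⟩ := hEj g hg' d (E.symm' (Quotient.exact hd))
    exact fun ⟨a, ha⟩ => hg' g' hgg' (hrange g' a ha.symm)
  · refine Quotient.ind fun g hg => Quotient.ind fun g' _ h => Quotient.sound ?_
    have hg' : ∀ g', C g g' → g' ∉ range o := fun g' h => hg g' (Quotient.sound (C.symm' h))
    obtain ⟨g'', hgg'', hg''⟩ := hEj g hg' (j g') (Quotient.exact h)
    exact hj hg'' ▸ hgg''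
  · refine Quotient.ind fun d hd => ?_
    obtain ⟨g, rfl⟩ := hcover d (hd d rfl)
    refine ⟨Quotient.mk C g, fun g' hg' ⟨c, hc⟩ => hd (j g') ?_ ⟨u c, by rw [← hc, hcomm]⟩, rfl⟩
    exact Quotient.sound ((le_sup_left : _ ≤ E) (le_comap_map (Quotient.exact hg')))

end Gluing

end Setoid

open Setoid

section Diagrams

variable {k l m v w : ℕ}

theorem jointSetoid_eq_sup (p : Setoid (Pt k l)) (q : Setoid (Pt l w)) :
    jointSetoid p q = p.map upEmb ⊔ q.map loEmb :=
  le_antisymm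
    (eqvGen_le <| by
      rintro _ _ (⟨a, b, h, rfl, rfl⟩ | ⟨a, b, h, rfl, rfl⟩)
      · exact (le_sup_left : _ ≤ p.map upEmb ⊔ _) (le_comap_map h)
      · exact (le_sup_right : _ ≤ _ ⊔ q.map loEmb) (le_comap_map h))
    (sup_le (map_le_iff_le_comap.2 fun a b h => .rel _ _ (.inl ⟨a, b, h, rfl, rfl⟩))
      (map_le_iff_le_comap.2 fun a b h => .rel _ _ (.inr ⟨a, b, h, rfl, rfl⟩)))

theorem notMem_range_outEmb_iff (x : X3 k l w) :
    x ∉ range outEmb ↔ ∃ j, x = Sum.inr (Sum.inl j) := by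
  rcases x with _ | _ | _ <;> simp [outEmb]

theorem cb_eq_card (p : Setoid (Pt k l)) (q : Setoid (Pt l w)) :
    cb p q = Nat.card {c : Quotient (jointSetoid p q) //
      ∀ x, Quotient.mk _ x = c → x ∉ range (outEmb : Pt k w → X3 k l w)} :=
  Nat.card_congr <| Equiv.subtypeEquivRight fun _ =>
    forall_congr' fun x => imp_congr_right fun _ => (notMem_range_outEmb_iff x).symm

theorem blocks_jointSetoid (p : Setoid (Pt k l)) (q : Setoid (Pt l w)) :
    blocks (jointSetoid p q) = blocks (compPart p q) + cb p q := by
  rw [cb_eq_card]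
  exact card_quotient_eq_card_comap_add _ outEmb

end Diagrams

abbrev X4 (k l m v : ℕ) := Sum (Fin k) (Sum (Fin l) (Sum (Fin m) (Fin v)))

section FourRows

variable {k l m v : ℕ}

def skipK : X3 l m v → X4 k l m v := Sum.inr
def skipL : X3 k m v → X4 k l m v := Sum.map id Sum.inr
def skipM : X3 k l v → X4 k l m v := Sum.map id (Sum.map id Sum.inr)
def skipV : X3 k l m → X4 k l m v := Sum.map id (Sum.map id Sum.inl)

theorem skipK_injective : Injective (skipK : X3 l m v → X4 k l m v) := Sum.inr_injective
theorem skipL_injective : Injective (skipL : X3 k m v → X4 k l m v) :=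
  Sum.map_injective.2 ⟨injective_id, Sum.inr_injective⟩
theorem skipM_injective : Injective (skipM : X3 k l v → X4 k l m v) :=
  Sum.map_injective.2 ⟨injective_id, Sum.map_injective.2 ⟨injective_id, Sum.inr_injective⟩⟩
theorem skipV_injective : Injective (skipV : X3 k l m → X4 k l m v) :=
  Sum.map_injective.2 ⟨injective_id, Sum.map_injective.2 ⟨injective_id, Sum.inl_injective⟩⟩

theorem skipV_comp_upEmb : (skipV ∘ upEmb : Pt k l → X4 k l m v) = skipM ∘ upEmb := by
  ext (_ | _) <;> rfl
theorem skipV_comp_loEmb : (skipV ∘ loEmb : Pt l m → X4 k l m v) = skipK ∘ upEmb := by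
  ext (_ | _) <;> rfl
theorem skipL_comp_loEmb : (skipL ∘ loEmb : Pt m v → X4 k l m v) = skipK ∘ loEmb := by
  ext (_ | _) <;> rfl

theorem skipV_outEmb (c : Pt k m) : (skipV (outEmb c) : X4 k l m v) = skipL (upEmb c) := by
  rcases c with _ | _ <;> rfl
theorem skipK_outEmb (c : Pt l v) : (skipK (outEmb c) : X4 k l m v) = skipM (loEmb c) := by
  rcases c with _ | _ <;> rfl

theorem exists_outEmb_of_skipV_eq (g : X3 k l m) (a : X3 k m v) (h : skipV g = skipL a) :
    ∃ c, outEmb c = g := by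
  rcases g with _ | _ | _ <;> rcases a with _ | _ | _ <;> simp_all [skipV, skipL, outEmb]
theorem exists_outEmb_of_skipK_eq (g : X3 l m v) (a : X3 k l v) (h : skipK g = skipM a) :
    ∃ c, outEmb c = g := by
  rcases g with _ | _ | _ <;> rcases a with _ | _ | _ <;> simp_all [skipK, skipM, outEmb]

theorem mem_range_skipV_of_notMem (d : X4 k l m v) (hd : d ∉ range skipL) : d ∈ range skipV := by
  rcases d with _ | _ | _ | _ <;> simp_all [skipV, skipL]

theorem mem_range_skipK_of_notMem (d : X4 k l m v) (hd : d ∉ range skipM) : d ∈ range skipK := by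
  rcases d with _ | _ | _ | _ <;> simp_all [skipK, skipM]

def quadSetoid (p : Setoid (Pt k l)) (r : Setoid (Pt l m)) (s : Setoid (Pt m v)) :
    Setoid (X4 k l m v) :=
  (jointSetoid p r).map skipV ⊔ (s.map loEmb).map skipL

variable (p : Setoid (Pt k l)) (r : Setoid (Pt l m)) (s : Setoid (Pt m v))

theorem quadSetoid_eq :
    quadSetoid p r s = (jointSetoid r s).map skipK ⊔ (p.map upEmb).map skipM := by
  simp only [quadSetoid, jointSetoid_eq_sup, map_sup, map_map, skipV_comp_upEmb, skipV_comp_loEmb,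
    skipL_comp_loEmb]
  ac_rfl

theorem blocks_quadSetoid_eq_left :
    blocks (quadSetoid p r s) = blocks (jointSetoid (compPart p r) s) + cb p r := by
  rw [blocks, card_quotient_eq_card_comap_add _ skipL, quadSetoid,
    comap_map_sup_map skipL_injective skipV_injective skipV_outEmb exists_outEmb_of_skipV_eq,
    card_classes_disjoint_range_map_sup skipL_injective skipV_injective skipV_outEmb
      exists_outEmb_of_skipV_eq mem_range_skipV_of_notMem, cb_eq_card,
    jointSetoid_eq_sup (compPart p r) s]
  rfl

theorem blocks_quadSetoid_eq_right :
    blocks (quadSetoid p r s) = blocks (jointSetoid p (compPart r s)) + cb r s := by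
  rw [quadSetoid_eq, blocks, card_quotient_eq_card_comap_add _ skipM,
    comap_map_sup_map skipM_injective skipK_injective skipK_outEmb exists_outEmb_of_skipK_eq,
    card_classes_disjoint_range_map_sup skipM_injective skipK_injective skipK_outEmb
      exists_outEmb_of_skipK_eq mem_range_skipK_of_notMem, cb_eq_card,
    jointSetoid_eq_sup p (compPart r s), sup_comm]
  rfl

end FourRows

theorem cy_comp_eq_general {k l m v : ℕ} (p : Setoid (Pt k l)) (r : Setoid (Pt l m))
    (s : Setoid (Pt m v)) :
    cy p (compPart r s) = cy p r + cy (compPart p r) s - cy r s := by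
  have h₁ := blocks_jointSetoid p (compPart r s)
  have h₂ := blocks_jointSetoid p r
  have h₃ := blocks_jointSetoid (compPart p r) s
  have h₄ := blocks_jointSetoid r s
  have hl := blocks_quadSetoid_eq_left p r s
  have hr := blocks_quadSetoid_eq_right p r s
  unfold cy
  omega

/-- For noncrossing partitions `p ∈ NC(k,l)`, `r ∈ NC(l,m)`, `s ∈ NC(m,v)`,
`cy(p, s∘r) = cy(p,r) + cy(r∘p, s) - cy(r,s)`. -/
theorem cy_comp_eq {k l m v : ℕ} (p : Setoid (Pt k l)) (r : Setoid (Pt l m))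
    (s : Setoid (Pt m v)) (hp : Noncrossing p) (hr : Noncrossing r) (hs : Noncrossing s) :
    cy p (compPart r s) = cy p r + cy (compPart p r) s - cy r s :=
  cy_comp_eq_general p r s
end

section
/- Every faithful state ψ on the matrix algebra M_n(ℂ) is of the form ψ = Tr(Q·) for a unique positive invertible matrix Q with Tr(Q) = 1, and ψ is a δ-form with δ = Tr(Q⁻¹), i.e. m m* = Tr(Q⁻¹)·id, where m is multiplication and m* its adjoint with respect to the inner product ⟨x,y⟩ = ψ(y*x). -/
open scoped TensorProduct ComplexOrder

/-- The sesquilinear pairing `u ↦ ⟨u, x ⊗ y⟩` on `B ⊗ B`, where `B` carries the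
inner product `⟨a, b⟩ = ψ(b* a)` induced by a state `ψ`; on pure tensors,
`⟨a ⊗ b, x ⊗ y⟩ = ψ(x* a) ψ(y* b)`. -/
noncomputable def pairing {M : Type*} [Ring M] [StarRing M] [Algebra ℂ M]
    (ψ : M →ₗ[ℂ] ℂ) (x y : M) : M ⊗[ℂ] M →ₗ[ℂ] ℂ :=
  TensorProduct.lift ((LinearMap.mul ℂ ℂ).compl₁₂
    (ψ ∘ₗ LinearMap.mulLeft ℂ (star x)) (ψ ∘ₗ LinearMap.mulLeft ℂ (star y)))

/-- `ψ` is a `δ`-form: the multiplication map `m : B ⊗ B → B` and its adjoint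
`m*` with respect to the inner products induced by `ψ` satisfy `m m* = δ·id`. -/
def IsDeltaForm {M : Type*} [Ring M] [StarRing M] [Algebra ℂ M]
    (ψ : M →ₗ[ℂ] ℂ) (δ : ℂ) : Prop :=
  ∃ T : M →ₗ[ℂ] M ⊗[ℂ] M,
    (∀ a x y : M, pairing ψ x y (T a) = ψ (star (x * y) * a)) ∧
    (LinearMap.mul' ℂ M) ∘ₗ T = δ • LinearMap.id

/-! With `eᵢⱼ = single i j 1` and `Q i j = ψ eⱼᵢ` one has `ψ x = Tr (Q x)`, and `Q` is unique
because the trace pairing is nondegenerate. As `ψ (x* x)` is real, `ψ` commutes with `star`, so `Q` is Hermitian;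
for the matrix `x` whose only nonzero row is `v*`, `ψ (x* x) = v* Q v`, so faithfulness makes `Q`
positive definite. The adjoint of multiplication is `m* a = ∑ i j, eᵢⱼ Q⁻¹ ⊗ eⱼᵢ a`: by
`∑ i j, Tr (A eᵢⱼ) Tr (B eⱼᵢ) = Tr (A B)` its pairing with `x ⊗ y` is `Tr (x* a Q y*)`, and
`∑ i j, eᵢⱼ Q⁻¹ eⱼᵢ = Tr (Q⁻¹) • 1` gives `m m* = Tr (Q⁻¹) • id`. -/

@[simp]
theorem pairing_tmul {M : Type*} [Ring M] [StarRing M] [Algebra ℂ M] (ψ : M →ₗ[ℂ] ℂ)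
    (x y u v : M) : pairing ψ x y (u ⊗ₜ v) = ψ (star x * u) * ψ (star y * v) := by
  simp [pairing]

theorem LinearMap.map_star_of_im_apply_star_mul_self_eq_zero {A : Type*} [Ring A] [StarRing A]
    [Algebra ℂ A] [StarModule ℂ A] (ψ : A →ₗ[ℂ] ℂ)
    (h : ∀ x, (ψ (star x * x)).im = 0) (x : A) : ψ (star x) = star (ψ x) := by
  have h₁ : (ψ (x + star x)).im = 0 := by
    have : x + star x = star (1 + x) * (1 + x) - star 1 * 1 - star x * x := by
      simp only [star_add, star_one, add_mul, mul_add, one_mul, mul_one]; abel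
    rw [this, map_sub, map_sub, Complex.sub_im, Complex.sub_im, h, h, h]; simp
  have h₂ : (ψ (Complex.I • (x - star x))).im = 0 := by
    have : Complex.I • (x - star x) =
        star (1 + Complex.I • x) * (1 + Complex.I • x) - star 1 * 1 - star x * x := by
      simp only [star_add, star_one, star_smul, add_mul, mul_add, one_mul, mul_one,
        smul_mul_assoc, mul_smul_comm, Complex.star_def, Complex.conj_I]
      linear_combination (norm := module) Complex.I_sq • (star x * x)
    rw [this, map_sub, map_sub, Complex.sub_im, Complex.sub_im, h, h, h]; simp
  simp only [map_add, map_smul, map_sub, Complex.add_im, smul_eq_mul, Complex.mul_im,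
    Complex.I_re, Complex.I_im, Complex.sub_re] at h₁ h₂
  apply Complex.ext <;> simp <;> linarith

namespace Matrix

variable {n R : Type*} [DecidableEq n]

section CommSemiring

variable [CommSemiring R]

theorem single_eq_smul_single_one (i j : n) (a : R) : single i j a = a • single i j 1 := by
  rw [smul_single, smul_eq_mul, mul_one]

def densityMatrix (ψ : Matrix n n R →ₗ[R] R) : Matrix n n R :=
  of fun i j => ψ (single j i 1)

theorem isHermitian_densityMatrix [StarRing R] {ψ : Matrix n n R →ₗ[R] R}
    (h : ∀ x, ψ (star x) = star (ψ x)) : (densityMatrix ψ).IsHermitian := by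
  ext i j
  simp [densityMatrix, ← h, star_eq_conjTranspose]

variable [Fintype n]

theorem trace_densityMatrix_mul (ψ : Matrix n n R →ₗ[R] R) (x : Matrix n n R) :
    (densityMatrix ψ * x).trace = ψ x := by
  conv_rhs => rw [matrix_eq_sum_single x]
  simp only [trace, diag, mul_apply, densityMatrix, of_apply, map_sum]
  rw [Finset.sum_comm]
  refine Finset.sum_congr rfl fun i _ => Finset.sum_congr rfl fun j _ => ?_
  rw [single_eq_smul_single_one i j (x i j), map_smul, smul_eq_mul, mul_comm]

theorem eq_densityMatrix {ψ : Matrix n n R →ₗ[R] R} {Q : Matrix n n R}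
    (h : ∀ x, ψ x = (Q * x).trace) : Q = densityMatrix ψ :=
  ext_iff_trace_mul_right.mpr fun x => by rw [trace_densityMatrix_mul, h]

theorem star_vecMulVec_single_mul_self [StarRing R] (i : n) (v : n → R) :
    star (vecMulVec (Pi.single i 1) (star v)) * vecMulVec (Pi.single i 1) (star v) =
      vecMulVec v (star v) := by
  simp [star_eq_conjTranspose, conjTranspose_vecMulVec, vecMulVec_mul_vecMulVec]

theorem sum_single_mul_mul_single (M : Matrix n n R) :
    ∑ i, ∑ j, single i j (1 : R) * M * single j i 1 = M.trace • (1 : Matrix n n R) := by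
  simp only [single_mul_mul_single, one_mul, mul_one, single_eq_smul_single_one _ _ (M _ _)]
  rw [Finset.sum_comm]
  simp only [← Finset.smul_sum, sum_single_one, ← Finset.sum_smul, trace, diag]

theorem sum_trace_mul_single_mul_trace_mul_single (A B : Matrix n n R) :
    ∑ i, ∑ j, (A * single i j (1 : R)).trace * (B * single j i 1).trace = (A * B).trace := by
  simp only [trace_mul_single, MulOpposite.op_one, one_smul]
  rw [Finset.sum_comm]
  simp [trace, mul_apply]

end CommSemiring

variable [Fintype n]

theorem posDef_densityMatrix [CommRing R] [StarRing R] [PartialOrder R]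
    {ψ : Matrix n n R →ₗ[R] R} (hstar : ∀ x, ψ (star x) = star (ψ x))
    (hpos : ∀ x, x ≠ 0 → 0 < ψ (star x * x)) : (densityMatrix ψ).PosDef := by
  refine .of_dotProduct_mulVec_pos (isHermitian_densityMatrix hstar) fun v hv => ?_
  obtain ⟨i, hi⟩ := Function.ne_iff.mp hv
  have hx : vecMulVec (Pi.single i 1) (star v) ≠ 0 := fun h => hi <| by
    simpa [vecMulVec_apply] using congrFun (congrFun h i) i
  convert hpos _ hx using 1
  rw [star_vecMulVec_single_mul_self, ← trace_densityMatrix_mul, mul_vecMulVec, trace_vecMulVec,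
    dotProduct_comm]

noncomputable def mulAdjoint [CommRing R] (Q : Matrix n n R) :
    Matrix n n R →ₗ[R] Matrix n n R ⊗[R] Matrix n n R :=
  ∑ i, ∑ j,
    TensorProduct.mk R _ _ (single i j 1 * Q⁻¹) ∘ₗ LinearMap.mulLeft R (single j i 1)

theorem mulAdjoint_apply [CommRing R] (Q a : Matrix n n R) :
    mulAdjoint Q a = ∑ i, ∑ j, (single i j 1 * Q⁻¹) ⊗ₜ (single j i 1 * a) := by
  simp [mulAdjoint]

theorem mul'_comp_mulAdjoint [CommRing R] (Q : Matrix n n R) :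
    LinearMap.mul' R (Matrix n n R) ∘ₗ mulAdjoint Q = Q⁻¹.trace • LinearMap.id := by
  ext1 a
  simp only [LinearMap.comp_apply, mulAdjoint_apply, map_sum, LinearMap.mul'_apply, ← mul_assoc,
    ← Finset.sum_mul, sum_single_mul_mul_single]
  simp

theorem pairing_mulAdjoint {ψ : Matrix n n ℂ →ₗ[ℂ] ℂ} {Q : Matrix n n ℂ}
    (hQ : IsUnit Q) (hψ : ∀ x, ψ x = (Q * x).trace) (a x y : Matrix n n ℂ) :
    pairing ψ x y (mulAdjoint Q a) = ψ (star (x * y) * a) := by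
  have hleft (i j : n) : ψ (star x * (single i j 1 * Q⁻¹)) = (star x * single i j 1).trace := by
    rw [hψ, trace_mul_comm, ← Matrix.mul_assoc,
      nonsing_inv_mul_cancel_right _ _ ((isUnit_iff_isUnit_det Q).mp hQ)]
  have hright (i j : n) :
      ψ (star y * (single j i 1 * a)) = (a * Q * star y * single j i 1).trace := by
    rw [hψ, Matrix.mul_assoc a, Matrix.mul_assoc a, trace_mul_comm a]
    simp only [Matrix.mul_assoc]
  simp only [mulAdjoint_apply, map_sum, pairing_tmul, hleft, hright]
  rw [sum_trace_mul_single_mul_trace_mul_single, hψ, star_mul, trace_mul_comm, Matrix.mul_assoc,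
    Matrix.mul_assoc, trace_mul_comm a]
  simp only [Matrix.mul_assoc]

theorem isDeltaForm_of_eq_trace_mul {ψ : Matrix n n ℂ →ₗ[ℂ] ℂ} {Q : Matrix n n ℂ}
    (hQ : IsUnit Q) (hψ : ∀ x, ψ x = (Q * x).trace) : IsDeltaForm ψ Q⁻¹.trace :=
  ⟨mulAdjoint Q, pairing_mulAdjoint hQ hψ, mul'_comp_mulAdjoint Q⟩

end Matrix

open Matrix in
theorem faithful_state_matrix_deltaForm_general (n : ℕ)
    (ψ : Matrix (Fin n) (Fin n) ℂ →ₗ[ℂ] ℂ)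
    (hstate : ψ 1 = 1)
    (hpos : ∀ x, 0 ≤ (ψ (star x * x)).re ∧ (ψ (star x * x)).im = 0)
    (hfaith : ∀ x, ψ (star x * x) = 0 → x = 0) :
    (∃! Q : Matrix (Fin n) (Fin n) ℂ,
      Q.PosDef ∧ Q.trace = 1 ∧ ∀ x, ψ x = (Q * x).trace) ∧
    (∀ Q : Matrix (Fin n) (Fin n) ℂ,
      Q.PosDef → Q.trace = 1 → (∀ x, ψ x = (Q * x).trace) →
        IsDeltaForm ψ (Q⁻¹).trace) := by
  have hstar := ψ.map_star_of_im_apply_star_mul_self_eq_zero fun x => (hpos x).2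
  have hstrict : ∀ x, x ≠ 0 → 0 < ψ (star x * x) := fun x hx =>
    lt_of_le_of_ne (Complex.nonneg_iff.mpr ⟨(hpos x).1, (hpos x).2.symm⟩)
      fun h => hx (hfaith x h.symm)
  have htrace : (densityMatrix ψ).trace = 1 := by
    simpa using (trace_densityMatrix_mul ψ 1).trans hstate
  exact ⟨⟨densityMatrix ψ, ⟨posDef_densityMatrix hstar hstrict, htrace,
      fun x => (trace_densityMatrix_mul ψ x).symm⟩, fun Q hQ => eq_densityMatrix hQ.2.2⟩,
    fun Q hQ _ hψ => isDeltaForm_of_eq_trace_mul hQ.isUnit hψ⟩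

/-- Every faithful state `ψ` on `M_n(ℂ)` is of the form `Tr(Q ·)` for a unique
positive invertible `Q` with `Tr(Q) = 1`, and `ψ` is a `δ`-form with
`δ = Tr(Q⁻¹)`, i.e. `m m* = Tr(Q⁻¹)·id`. -/
theorem faithful_state_matrix_deltaForm (n : ℕ) (hn : 0 < n)
    (ψ : Matrix (Fin n) (Fin n) ℂ →ₗ[ℂ] ℂ)
    (hstate : ψ 1 = 1)
    (hpos : ∀ x, 0 ≤ (ψ (star x * x)).re ∧ (ψ (star x * x)).im = 0)
    (hfaith : ∀ x, ψ (star x * x) = 0 → x = 0) :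
    (∃! Q : Matrix (Fin n) (Fin n) ℂ,
      Q.PosDef ∧ Q.trace = 1 ∧ ∀ x, ψ x = (Q * x).trace) ∧
    (∀ Q : Matrix (Fin n) (Fin n) ℂ,
      Q.PosDef → Q.trace = 1 → (∀ x, ψ x = (Q * x).trace) →
        IsDeltaForm ψ (Q⁻¹).trace) :=
  faithful_state_matrix_deltaForm_general n ψ hstate hpos hfaith
end

section
/- For p ∈ NC(k,l), the adjoint of the linear map T_p: B^{⊗k} → B^{⊗l} (with respect to the inner products induced by ψ^{⊗k} and ψ^{⊗l}) equals T_{p*}, where p* ∈ NC(l,k) is the vertical reflection of p. -/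
open scoped Classical

def tleft {k l v w : ℕ} : Pt k l → Pt (k + v) (l + w) :=
  Sum.map (Fin.castAdd v) (Fin.castAdd w)

def tright {k l v w : ℕ} : Pt v w → Pt (k + v) (l + w) :=
  Sum.map (Fin.natAdd k) (Fin.natAdd l)

/-- Horizontal concatenation (tensor product) of partitions. -/
def tensorPart {k l v w : ℕ} (p : Setoid (Pt k l)) (q : Setoid (Pt v w)) :
    Setoid (Pt (k + v) (l + w)) :=
  Relation.EqvGen.setoid (fun x y =>
    (∃ a b, p.r a b ∧ x = tleft a ∧ y = tleft b) ∨
    (∃ a b, q.r a b ∧ x = tright a ∧ y = tright b))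

/-- Reflection (adjoint) of a partition, exchanging the upper and lower rows. -/
def adjPart {k l : ℕ} (p : Setoid (Pt k l)) : Setoid (Pt l k) :=
  Setoid.comap Sum.swap p

/-- The multimatrix C*-algebra `B = ⊕_{α} M_{n α}(ℂ)`. -/
abbrev MAlg (c : ℕ) (n : Fin c → ℕ) := ∀ α : Fin c, Matrix (Fin (n α)) (Fin (n α)) ℂ

/-- The index set of the basis of matrix units of `B`. -/
abbrev Idx (c : ℕ) (n : Fin c → ℕ) := Σ α : Fin c, Fin (n α) × Fin (n α)

/-- The matrix unit `e_{ij}^α` of `B`. -/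
def eMat {c : ℕ} {n : Fin c → ℕ} (x : Idx c n) : MAlg c n :=
  Pi.single x.1 (Matrix.single x.2.1 x.2.2 (1 : ℂ))

/-- The rescaled matrix unit `b_{ij}^α = ψ(e_{jj}^α)^{-1/2} e_{ij}^α`, where
`ψ = ⊕_α Tr(Q_α ·)` with `Q_α` diagonal with entries `Q α i`. -/
noncomputable def bMat {c : ℕ} {n : Fin c → ℕ} (Q : ∀ α, Fin (n α) → ℝ)
    (x : Idx c n) : MAlg c n :=
  ((Real.sqrt (Q x.1 x.2.2) : ℂ))⁻¹ • eMat x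

/-- The state `ψ = ⊕_α Tr(Q_α ·)` on `B` (each `Q_α` diagonal with entries `Q α i`). -/
noncomputable def psiMap {c : ℕ} {n : Fin c → ℕ} (Q : ∀ α, Fin (n α) → ℝ)
    (x : MAlg c n) : ℂ :=
  ∑ α, ∑ i, (Q α i : ℂ) * x α i i

/-- `b_v^↑`: the ordered product of the rescaled matrix units attached to the
upper points of the block `cls` (empty product = 1). -/
noncomputable def upProdB {c : ℕ} {n : Fin c → ℕ} (Q : ∀ α, Fin (n α) → ℝ)
    {k l : ℕ} (p : Setoid (Pt k l)) (up : Fin k → Idx c n) (cls : Quotient p) :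
    MAlg c n :=
  (((List.finRange k).filter
      (fun i => decide (Quotient.mk p (Sum.inl i : Pt k l) = cls))).map
    (fun i => bMat Q (up i))).prod

/-- `b_v^↓`: the ordered product of the rescaled matrix units attached to the
lower points of the block `cls` (empty product = 1). -/
noncomputable def loProdB {c : ℕ} {n : Fin c → ℕ} (Q : ∀ α, Fin (n α) → ℝ)
    {k l : ℕ} (p : Setoid (Pt k l)) (lo : Fin l → Idx c n) (cls : Quotient p) :
    MAlg c n :=
  (((List.finRange l).filter
      (fun j => decide (Quotient.mk p (Sum.inr j : Pt k l) = cls))).map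
    (fun j => bMat Q (lo j))).prod

/-- The coefficient `δ_p^{α,β}(ij,rs) = ∏_{blocks v} ψ((b_v^↓)* b_v^↑)`. -/
noncomputable def dcoef {c : ℕ} {n : Fin c → ℕ} (Q : ∀ α, Fin (n α) → ℝ)
    {k l : ℕ} (p : Setoid (Pt k l)) (up : Fin k → Idx c n) (lo : Fin l → Idx c n) : ℂ :=
  letI : Fintype (Quotient p) := Fintype.ofFinite _
  ∏ cls : Quotient p, psiMap Q (star (loProdB Q p lo cls) * upProdB Q p up cls)

/-- The matrix (in the orthonormal basis of rescaled matrix units of `B^{⊗k}`,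
`B^{⊗l}`) of the linear map `T_p : B^{⊗k} → B^{⊗l}` associated to `p`. -/
noncomputable def Tmat {c : ℕ} {n : Fin c → ℕ} (Q : ∀ α, Fin (n α) → ℝ)
    {k l : ℕ} (p : Setoid (Pt k l)) :
    Matrix (Fin l → Idx c n) (Fin k → Idx c n) ℂ :=
  Matrix.of fun lo up => dcoef Q p up lo

lemma psiMap_star {c : ℕ} {n : Fin c → ℕ} (Q : ∀ α, Fin (n α) → ℝ) (M : MAlg c n) :
    psiMap Q (star M) = star (psiMap Q M) := by
  simp [psiMap, star_sum, Matrix.star_apply, Complex.conj_ofReal]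

def adjPartQuotientEquiv {k l : ℕ} (p : Setoid (Pt k l)) :
    Quotient (adjPart p) ≃ Quotient p :=
  Quotient.congr (Equiv.sumComm (Fin l) (Fin k)) fun _ _ => Iff.rfl

lemma mk_adjPart_eq_iff {k l : ℕ} (p : Setoid (Pt k l)) (a : Pt l k)
    (cls : Quotient (adjPart p)) :
    Quotient.mk (adjPart p) a = cls ↔ Quotient.mk p a.swap = adjPartQuotientEquiv p cls :=
  (adjPartQuotientEquiv p).apply_eq_iff_eq.symm

lemma upProdB_adjPart {c : ℕ} {n : Fin c → ℕ} (Q : ∀ α, Fin (n α) → ℝ)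
    {k l : ℕ} (p : Setoid (Pt k l)) (lo : Fin l → Idx c n) (cls : Quotient (adjPart p)) :
    upProdB Q (adjPart p) lo cls = loProdB Q p lo (adjPartQuotientEquiv p cls) := by
  simp only [upProdB, loProdB, mk_adjPart_eq_iff]
  rfl

lemma loProdB_adjPart {c : ℕ} {n : Fin c → ℕ} (Q : ∀ α, Fin (n α) → ℝ)
    {k l : ℕ} (p : Setoid (Pt k l)) (up : Fin k → Idx c n) (cls : Quotient (adjPart p)) :
    loProdB Q (adjPart p) up cls = upProdB Q p up (adjPartQuotientEquiv p cls) := by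
  simp only [upProdB, loProdB, mk_adjPart_eq_iff]
  rfl

/-- Each block factor `ψ((b↓)* b↑)` is conjugated by reflecting `p`, because `ψ` is
self-adjoint (its density matrices are real). -/
lemma dcoef_adjPart {c : ℕ} {n : Fin c → ℕ} (Q : ∀ α, Fin (n α) → ℝ)
    {k l : ℕ} (p : Setoid (Pt k l)) (up : Fin k → Idx c n) (lo : Fin l → Idx c n) :
    dcoef Q (adjPart p) lo up = star (dcoef Q p up lo) := by
  let _ : Fintype (Quotient p) := Fintype.ofFinite _
  let _ : Fintype (Quotient (adjPart p)) := Fintype.ofFinite _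
  refine (Fintype.prod_equiv (adjPartQuotientEquiv p) _ _ fun cls => ?_).trans
    (star_prod _ _).symm
  rw [upProdB_adjPart, loProdB_adjPart, ← psiMap_star, star_mul, star_star]

theorem Tmat_adjoint_general {c : ℕ} {n : Fin c → ℕ} (Q : ∀ α, Fin (n α) → ℝ)
    {k l : ℕ} (p : Setoid (Pt k l)) :
    (Tmat Q p).conjTranspose = Tmat Q (adjPart p) := by
  ext up lo
  exact (dcoef_adjPart Q p up lo).symm

/-- `T_p* = T_{p*}`: the adjoint of `T_p : B^{⊗k} → B^{⊗l}` with respect to the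
inner products induced by `ψ^{⊗k}` and `ψ^{⊗l}` (whose matrix, in the orthonormal
bases of rescaled matrix units, is the conjugate transpose) is the map associated
to the reflected partition `p*`. -/
theorem Tmat_adjoint {c : ℕ} {n : Fin c → ℕ} (Q : ∀ α, Fin (n α) → ℝ)
    (hQ : ∀ α i, 0 < Q α i) (hnorm : ∑ α, ∑ i, Q α i = 1)
    {k l : ℕ} (p : Setoid (Pt k l)) (hp : Noncrossing p) :
    (Tmat Q p).conjTranspose = Tmat Q (adjPart p) :=
  Tmat_adjoint_general Q p
end

section
/- If a self-adjoint element x in a C*-probability space (A,τ) has moments τ(x^k) = C_k (the Catalan numbers) for all k ≥ 0, then the spectral distribution of x with respect to τ is the free Poisson (Marchenko–Pastur) law of parameter 1, i.e. the measure (1/2π)√(4/t − 1) dt on [0,4]. -/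
open MeasureTheory

/-- The free Poisson (Marchenko–Pastur) law of parameter 1: the measure
`(1/2π)√(4/t − 1) dt` on `[0,4]`. -/
noncomputable def mpLaw : Measure ℝ :=
  (volume.restrict (Set.Icc (0 : ℝ) 4)).withDensity
    (fun t => ENNReal.ofReal ((2 * Real.pi)⁻¹ * Real.sqrt (4 / t - 1)))

/-!
The measure `μ` lives on the compact set `spectrum ℝ x`, and `mpLaw` on `[0,4]`. On a compact
subset of `ℝ` polynomials are uniformly dense in the continuous functions (Weierstrass), so a
finite measure carried by it is determined by its moments; it therefore suffices to show that
the moments of `mpLaw` are the Catalan numbers. On `(0,4]` one has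
`t ^ k * √(4 / t - 1) = t ^ (k - 1/2) * (4 - t) ^ (1/2)`, so the `k`-th moment is
`(2π)⁻¹ 4 ^ (k+1) B(k + 1/2, 3/2)`, and `Γ(k + 1/2) = (2k)! √π / (4 ^ k k!)` evaluates it.
-/

open Real Nat Polynomial

theorem Real.Gamma_nat_add_half_eq_factorial (k : ℕ) :
    Gamma (k + 1 / 2) = (2 * k)! * √π / (4 ^ k * k !) := by
  induction k with
  | zero => simpa using Real.Gamma_one_half_eq
  | succ n ih =>
    rw [Nat.cast_succ, add_right_comm, Gamma_add_one (by positivity), ih,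
      show 2 * (n + 1) = 2 * n + 1 + 1 by ring, Nat.factorial_succ, Nat.factorial_succ,
      Nat.factorial_succ]
    push_cast
    field_simp
    ring

theorem Complex.betaIntegral_nat_add_half_three_halves (k : ℕ) :
    betaIntegral (k + 1 / 2) (3 / 2) = π * (2 * k).choose k / (2 * 4 ^ k * (k + 1)) := by
  have hΓ (n : ℕ) : Gamma (n + 1 / 2) = ((2 * n)! * √π / (4 ^ n * n !) : ℝ) := by
    rw [← Real.Gamma_nat_add_half_eq_factorial, ← Gamma_ofReal]
    push_cast
    rfl
  have hB := Gamma_mul_Gamma_eq_betaIntegral (s := k + 1 / 2) (t := (1 : ℕ) + 1 / 2)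
    (by simp; positivity) (by simp; norm_num)
  rw [hΓ, hΓ, show (k + 1 / 2 + ((1 : ℕ) + 1 / 2) : ℂ) = (k + 1 : ℕ) + 1 by push_cast; ring,
    Gamma_nat_eq_factorial, show ((1 : ℕ) + 1 / 2 : ℂ) = 3 / 2 by norm_num] at hB
  have hπ : ((√π : ℝ) : ℂ) * (√π : ℝ) = π := by
    rw [← ofReal_mul, Real.mul_self_sqrt pi_pos.le]
  rw [← mul_right_inj' (a := ((k + 1)! : ℂ)) (Nat.cast_ne_zero.mpr (factorial_ne_zero _)), ← hB,
    ← hπ, two_mul, ← Nat.add_choose_mul_factorial_mul_factorial]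
  push_cast [Nat.factorial_succ]
  field_simp
  ring

lemma ofReal_pow_mul_sqrt_four_div_sub_one {t : ℝ} (ht : t ∈ Set.Ioc 0 4) (k : ℕ) :
    ((t ^ k * √(4 / t - 1) : ℝ) : ℂ)
      = (t : ℂ) ^ ((k + 1 / 2 : ℂ) - 1) * ((4 : ℝ) - (t : ℂ)) ^ ((3 / 2 : ℂ) - 1) := by
  obtain ⟨ht0, ht4⟩ := ht
  have hexp₁ : (k + 1 / 2 : ℂ) - 1 = ((k - 1 / 2 : ℝ) : ℂ) := by push_cast; ring
  have hexp₂ : (3 / 2 : ℂ) - 1 = ((1 / 2 : ℝ) : ℂ) := by norm_num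
  rw [hexp₁, hexp₂, ← Complex.ofReal_sub, ← Complex.ofReal_cpow ht0.le,
    ← Complex.ofReal_cpow (by linarith), ← Complex.ofReal_mul, Complex.ofReal_inj,
    show 4 / t - 1 = (4 - t) / t by field_simp, Real.sqrt_div' _ ht0.le, Real.sqrt_eq_rpow,
    Real.sqrt_eq_rpow, Real.rpow_sub ht0, Real.rpow_natCast]
  ring

theorem integral_pow_mul_sqrt_four_div_sub_one (k : ℕ) :
    ∫ t in (0 : ℝ)..4, t ^ k * √(4 / t - 1) = 2 * π * (2 * k).choose k / (k + 1) := by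
  apply Complex.ofReal_injective
  rw [← intervalIntegral.integral_ofReal, intervalIntegral.integral_congr_ae
    (Filter.Eventually.of_forall fun t ht => ofReal_pow_mul_sqrt_four_div_sub_one
      (by simpa using ht) k),
    Complex.betaIntegral_scaled _ _ (by norm_num),
    Complex.betaIntegral_nat_add_half_three_halves,
    show (k + 1 / 2 + 3 / 2 - 1 : ℂ) = (k + 1 : ℕ) by push_cast; ring, Complex.cpow_natCast]
  push_cast
  field_simp
  ring

theorem integral_mpLaw (f : ℝ → ℝ) :
    ∫ t, f t ∂mpLaw = ∫ t in (0 : ℝ)..4, (2 * π)⁻¹ * √(4 / t - 1) * f t := by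
  rw [mpLaw, integral_withDensity_eq_integral_toReal_smul (by fun_prop)
      (Filter.Eventually.of_forall fun _ => ENNReal.ofReal_lt_top),
    intervalIntegral.integral_of_le (by norm_num), integral_Icc_eq_integral_Ioc]
  simp only [ENNReal.toReal_ofReal (by positivity : (0 : ℝ) ≤ (2 * π)⁻¹ * √_), smul_eq_mul]

theorem integral_pow_mpLaw (k : ℕ) : ∫ t, t ^ k ∂mpLaw = (2 * k).choose k / (k + 1) := by
  rw [integral_mpLaw]
  simp_rw [mul_assoc, mul_comm (√_), intervalIntegral.integral_const_mul,
    integral_pow_mul_sqrt_four_div_sub_one]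
  field_simp

-- An infinite total mass would have `toReal` equal to `0`, not `1`.
instance : IsProbabilityMeasure mpLaw :=
  ⟨ENNReal.toReal_eq_one_iff _ |>.mp (by simpa [measureReal_def] using integral_pow_mpLaw 0)⟩

theorem ae_mem_Icc_mpLaw : ∀ᵐ t ∂mpLaw, t ∈ Set.Icc (0 : ℝ) 4 :=
  (withDensity_absolutelyContinuous _ _).ae_le (ae_restrict_mem measurableSet_Icc)

namespace MeasureTheory.Measure

variable {μ ν : Measure ℝ} {K : Set ℝ}

lemma integrable_of_ae_mem_isCompact [IsFiniteMeasure μ] (hK : IsCompact K)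
    (hμ : ∀ᵐ t ∂μ, t ∈ K) {f : ℝ → ℝ} (hf : Continuous f) : Integrable f μ := by
  rw [← restrict_eq_self_of_ae_mem hμ]
  exact hf.continuousOn.integrableOn_compact hK

variable [IsFiniteMeasure μ] [IsFiniteMeasure ν]

lemma integral_eval_eq_of_integral_pow_eq (hK : IsCompact K)
    (hμ : ∀ᵐ t ∂μ, t ∈ K) (hν : ∀ᵐ t ∂ν, t ∈ K)
    (h : ∀ k : ℕ, ∫ t, t ^ k ∂μ = ∫ t, t ^ k ∂ν) (p : ℝ[X]) :
    ∫ t, p.eval t ∂μ = ∫ t, p.eval t ∂ν := by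
  induction p using Polynomial.induction_on' with
  | add p q hp hq =>
    simp only [eval_add]
    rw [integral_add, integral_add, hp, hq] <;>
      exact integrable_of_ae_mem_isCompact hK ‹_› (Polynomial.continuous _)
  | monomial n c => simp only [eval_monomial, integral_const_mul, h]

lemma integral_eq_of_integral_pow_eq (hK : IsCompact K)
    (hμ : ∀ᵐ t ∂μ, t ∈ K) (hν : ∀ᵐ t ∂ν, t ∈ K)
    (h : ∀ k : ℕ, ∫ t, t ^ k ∂μ = ∫ t, t ^ k ∂ν) {f : ℝ → ℝ} (hf : Continuous f) :
    ∫ t, f t ∂μ = ∫ t, f t ∂ν := by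
  have hK_Icc : K ⊆ Set.Icc (sInf K) (sSup K) := hK.isBounded.subset_Icc_sInf_sSup
  set C := μ.real Set.univ + ν.real Set.univ + 1
  have hC : 0 < C := by positivity
  refine eq_of_forall_dist_le fun ε hε => ?_
  obtain ⟨p, hp⟩ := exists_polynomial_near_of_continuousOn _ _ f hf.continuousOn (ε / C)
    (div_pos hε hC)
  have approx : ∀ ρ : Measure ℝ, [IsFiniteMeasure ρ] → (∀ᵐ t ∂ρ, t ∈ K) →
      dist (∫ t, f t ∂ρ) (∫ t, p.eval t ∂ρ) ≤ ε / C * ρ.real Set.univ := by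
    intro ρ _ hρ
    rw [dist_eq_norm, ← integral_sub (integrable_of_ae_mem_isCompact hK hρ hf)
      (integrable_of_ae_mem_isCompact hK hρ p.continuous)]
    refine norm_integral_le_of_norm_le_const ?_
    filter_upwards [hρ] with t ht
    rw [Real.norm_eq_abs, abs_sub_comm]
    exact (hp t (hK_Icc ht)).le
  calc dist (∫ t, f t ∂μ) (∫ t, f t ∂ν)
      ≤ dist (∫ t, f t ∂μ) (∫ t, p.eval t ∂μ) + dist (∫ t, f t ∂ν) (∫ t, p.eval t ∂ν) := by
        rw [integral_eval_eq_of_integral_pow_eq hK hμ hν h, dist_comm (∫ t, f t ∂ν)]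
        exact dist_triangle _ _ _
    _ ≤ ε / C * μ.real Set.univ + ε / C * ν.real Set.univ := add_le_add (approx μ hμ) (approx ν hν)
    _ ≤ ε := by
        rw [← mul_add, div_mul_eq_mul_div, div_le_iff₀ hC]
        exact mul_le_mul_of_nonneg_left (by linarith) hε.le

theorem ext_of_integral_pow_eq (hK : IsCompact K)
    (hμ : ∀ᵐ t ∂μ, t ∈ K) (hν : ∀ᵐ t ∂ν, t ∈ K)
    (h : ∀ k : ℕ, ∫ t, t ^ k ∂μ = ∫ t, t ^ k ∂ν) : μ = ν :=
  ext_of_forall_integral_eq_of_IsFiniteMeasure fun f =>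
    integral_eq_of_integral_pow_eq hK hμ hν h f.continuous

end MeasureTheory.Measure

theorem spectral_distribution_eq_mpLaw_general
    {A : Type*} [NormedRing A] [CompleteSpace A]
    [NormedAlgebra ℂ A] [NormedAlgebra ℝ A]
    (τ : A →ₗ[ℂ] ℂ)
    (x : A)
    (hmom : ∀ k : ℕ, τ (x ^ k) = ((2 * k).choose k : ℂ) / (k + 1))
    (μ : MeasureTheory.Measure ℝ) [MeasureTheory.IsProbabilityMeasure μ]
    (hsupp : μ (spectrum ℝ x)ᶜ = 0)
    (hμmom : ∀ k : ℕ, τ (x ^ k) = ((∫ t, t ^ k ∂μ : ℝ) : ℂ)) :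
    μ = mpLaw := by
  refine Measure.ext_of_integral_pow_eq ((spectrum.isCompact x).union isCompact_Icc)
    (measure_mono_null (Set.compl_subset_compl.mpr Set.subset_union_left) hsupp)
    (ae_mem_Icc_mpLaw.mono fun t ht => Or.inr ht) fun k => ?_
  apply Complex.ofReal_injective
  rw [integral_pow_mpLaw, ← hμmom, hmom]
  norm_num

/-- If a self-adjoint element `x` of a C*-probability space `(A,τ)` has moments
`τ(x^k) = C_k` (the Catalan numbers), then its spectral distribution — the unique
Borel probability measure `μ` on the spectrum of `x` with `τ(x^k) = ∫ t^k dμ` —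
is the free Poisson law of parameter 1. -/
theorem spectral_distribution_eq_mpLaw
    {A : Type*} [NormedRing A] [StarRing A] [CStarRing A] [CompleteSpace A]
    [NormedAlgebra ℂ A] [NormedAlgebra ℝ A] [IsScalarTower ℝ ℂ A]
    (τ : A →ₗ[ℂ] ℂ) (hτ1 : τ 1 = 1)
    (hpos : ∀ a, 0 ≤ (τ (star a * a)).re ∧ (τ (star a * a)).im = 0)
    (hfaith : ∀ a, τ (star a * a) = 0 → a = 0)
    (x : A) (hx : IsSelfAdjoint x)
    (hmom : ∀ k : ℕ, τ (x ^ k) = ((2 * k).choose k : ℂ) / (k + 1))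
    (μ : MeasureTheory.Measure ℝ) [MeasureTheory.IsProbabilityMeasure μ]
    (hsupp : μ (spectrum ℝ x)ᶜ = 0)
    (hμmom : ∀ k : ℕ, τ (x ^ k) = ((∫ t, t ^ k ∂μ : ℝ) : ℂ)) :
    μ = mpLaw :=
  spectral_distribution_eq_mpLaw_general τ x hmom μ hsupp hμmom
end

section
/- Every noncrossing partition p ∈ NC(k,l) can be obtained from the three elementary partitions — the identity partition in NC(1,1), the multiplication partition in NC(2,1) (one block containing both upper points and the lower point), and the unit partition in NC(0,1) (a single lower point) — using finitely many operations of horizontal concatenation (tensor product), vertical composition, and reflection (adjoint). -/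
open scoped Classical

/-- The partitions obtainable from the identity partition in `NC(1,1)`, the
multiplication partition in `NC(2,1)` and the unit partition in `NC(0,1)` by
tensor products, compositions and adjoints. -/
inductive GenNC : ∀ {k l : ℕ}, Setoid (Pt k l) → Prop where
  | id : GenNC (⊤ : Setoid (Pt 1 1))
  | mult : GenNC (⊤ : Setoid (Pt 2 1))
  | unit : GenNC (⊤ : Setoid (Pt 0 1))
  | tensor {k l v w : ℕ} {p : Setoid (Pt k l)} {q : Setoid (Pt v w)} :
      GenNC p → GenNC q → GenNC (tensorPart p q)
  | comp {k l w : ℕ} {p : Setoid (Pt k l)} {q : Setoid (Pt l w)} :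
      GenNC p → GenNC q → GenNC (compPart p q)
  | adj {k l : ℕ} {p : Setoid (Pt k l)} : GenNC p → GenNC (adjPart p)

section Aux
open Relation

/-- If an equivalence `s` on `β` matches `r` through `f : α → β` with a section `g`,
then `EqvGen r` is computed by `s`. -/
theorem eqvGen_iff_section {α β : Type*} (r : α → α → Prop) (s : Setoid β) (f : α → β)
    (g : β → α)
    (h1 : ∀ x y, r x y → s.r (f x) (f y))
    (h2 : ∀ x, Relation.EqvGen r x (g (f x)))
    (h3 : ∀ a b : β, s.r a b → Relation.EqvGen r (g a) (g b)) (x y : α) :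
    Relation.EqvGen r x y ↔ s.r (f x) (f y) := by
  constructor
  · intro h
    induction h with
    | rel a b h => exact h1 _ _ h
    | refl a => exact s.iseqv.refl _
    | symm a b _ ih => exact s.iseqv.symm ih
    | trans a b c _ _ ih1 ih2 => exact s.iseqv.trans ih1 ih2
  · intro h
    exact ((h2 x).trans _ _ _ (h3 _ _ h)).trans _ _ _ ((h2 y).symm _ _)

/-- The value of a point: its index in its own row. -/
def pv {k l : ℕ} : Pt k l → ℕ := Sum.elim Fin.val Fin.val

/-- Whether a point is in the upper row. -/
def isUp {k l : ℕ} : Pt k l → Prop := Sum.elim (fun _ => True) (fun _ => False)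

@[simp] theorem pv_inl {k l : ℕ} (i : Fin k) : pv (Sum.inl i : Pt k l) = i := rfl
@[simp] theorem pv_inr {k l : ℕ} (j : Fin l) : pv (Sum.inr j : Pt k l) = j := rfl

@[simp] theorem tleft_inl {k l v w : ℕ} (i : Fin k) :
    (tleft (Sum.inl i) : Pt (k + v) (l + w)) = Sum.inl (Fin.castAdd v i) := rfl
@[simp] theorem tleft_inr {k l v w : ℕ} (j : Fin l) :
    (tleft (Sum.inr j) : Pt (k + v) (l + w)) = Sum.inr (Fin.castAdd w j) := rfl
@[simp] theorem tright_inl {k l v w : ℕ} (i : Fin v) :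
    (tright (Sum.inl i) : Pt (k + v) (l + w)) = Sum.inl (Fin.natAdd k i) := rfl
@[simp] theorem tright_inr {k l v w : ℕ} (j : Fin w) :
    (tright (Sum.inr j) : Pt (k + v) (l + w)) = Sum.inr (Fin.natAdd l j) := rfl

/-- The explicit relation describing a tensor product. -/
def tRel {k l v w : ℕ} (p : Setoid (Pt k l)) (q : Setoid (Pt v w))
    (x y : Pt (k + v) (l + w)) : Prop :=
  (∃ a b, p.r a b ∧ x = tleft a ∧ y = tleft b) ∨
  (∃ a b, q.r a b ∧ x = tright a ∧ y = tright b)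

theorem tleft_injective {k l v w : ℕ} :
    Function.Injective (tleft (k := k) (l := l) (v := v) (w := w)) := by
  rintro (i | j) (i' | j') h <;>
    simp only [tleft_inl, tleft_inr, Sum.inl.injEq, Sum.inr.injEq, Fin.ext_iff,
      Fin.coe_castAdd, reduceCtorEq] at h <;> simp [Fin.ext_iff, h]

theorem tright_injective {k l v w : ℕ} :
    Function.Injective (tright (k := k) (l := l) (v := v) (w := w)) := by
  rintro (i | j) (i' | j') h <;>
    simp only [tright_inl, tright_inr, Sum.inl.injEq, Sum.inr.injEq, Fin.ext_iff,
      Fin.coe_natAdd, reduceCtorEq] at h <;> simp [Fin.ext_iff] <;> omega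

theorem tleft_ne_tright {k l v w : ℕ} (a : Pt k l) (b : Pt v w) :
    tleft (v := v) (w := w) a ≠ tright (k := k) (l := l) b := by
  obtain (i | j) := a <;> obtain (i' | j') := b <;>
    simp only [tleft_inl, tleft_inr, tright_inl, tright_inr, ne_eq, Sum.inl.injEq,
      Sum.inr.injEq, Fin.ext_iff, Fin.coe_castAdd, Fin.coe_natAdd, reduceCtorEq] <;>
    first
    | exact fun h => absurd h (by omega)
    | simp

theorem pt_cases {k l v w : ℕ} (x : Pt (k + v) (l + w)) :
    (∃ a : Pt k l, x = tleft a) ∨ (∃ a : Pt v w, x = tright a) := by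
  cases x with
  | inl i =>
    have hi := i.isLt
    rcases lt_or_ge (i : ℕ) k with h | h
    · exact Or.inl ⟨Sum.inl ⟨i, h⟩, by simp [Fin.ext_iff]⟩
    · refine Or.inr ⟨Sum.inl ⟨(i : ℕ) - k, by omega⟩, ?_⟩
      simp only [tright_inl, Sum.inl.injEq, Fin.ext_iff, Fin.coe_natAdd]
      omega
  | inr j =>
    have hj := j.isLt
    rcases lt_or_ge (j : ℕ) l with h | h
    · exact Or.inl ⟨Sum.inr ⟨j, h⟩, by simp [Fin.ext_iff]⟩
    · refine Or.inr ⟨Sum.inr ⟨(j : ℕ) - l, by omega⟩, ?_⟩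
      simp only [tright_inr, Sum.inr.injEq, Fin.ext_iff, Fin.coe_natAdd]
      omega

theorem tRel_equivalence {k l v w : ℕ} (p : Setoid (Pt k l)) (q : Setoid (Pt v w)) :
    Equivalence (tRel p q) := by
  constructor
  · intro x
    rcases pt_cases x with ⟨a, rfl⟩ | ⟨a, rfl⟩
    · exact Or.inl ⟨a, a, p.iseqv.refl a, rfl, rfl⟩
    · exact Or.inr ⟨a, a, q.iseqv.refl a, rfl, rfl⟩
  · rintro x y (⟨a, b, h, rfl, rfl⟩ | ⟨a, b, h, rfl, rfl⟩)
    · exact Or.inl ⟨b, a, p.iseqv.symm h, rfl, rfl⟩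
    · exact Or.inr ⟨b, a, q.iseqv.symm h, rfl, rfl⟩
  · rintro x y z (⟨a, b, h, rfl, rfl⟩ | ⟨a, b, h, rfl, rfl⟩)
      <;> rintro (⟨a', b', h', he, rfl⟩ | ⟨a', b', h', he, rfl⟩)
    · obtain rfl : b = a' := tleft_injective he
      exact Or.inl ⟨a, b', p.iseqv.trans h h', rfl, rfl⟩
    · exact absurd he (tleft_ne_tright _ _)
    · exact absurd he.symm (tleft_ne_tright _ _)
    · obtain rfl : b = a' := tright_injective he
      exact Or.inr ⟨a, b', q.iseqv.trans h h', rfl, rfl⟩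

theorem tensorPart_rel_iff {k l v w : ℕ} (p : Setoid (Pt k l)) (q : Setoid (Pt v w))
    (x y : Pt (k + v) (l + w)) :
    (tensorPart p q).r x y ↔ tRel p q x y :=
  Equivalence.eqvGen_iff (tRel_equivalence p q)

theorem adjPart_top {k l : ℕ} : adjPart (⊤ : Setoid (Pt k l)) = (⊤ : Setoid (Pt l k)) :=
  Setoid.ext fun _ _ => Iff.rfl

end Aux
section Aux2
open Relation

/-- The identity partition on `n` strands. -/
def idPart (n : ℕ) : Setoid (Pt n n) := Setoid.ker pv

theorem idPart_rel {n : ℕ} (x y : Pt n n) : (idPart n).r x y ↔ pv x = pv y := Iff.rfl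

theorem genNC_eq {k l : ℕ} {p q : Setoid (Pt k l)} (h : GenNC p) (e : p = q) : GenNC q := e ▸ h

theorem genNC_empty (p : Setoid (Pt 0 0)) : GenNC p := by
  have h := GenNC.comp GenNC.unit (GenNC.adj GenNC.unit)
  refine genNC_eq h (Setoid.ext fun x _ => ?_)
  cases x with
  | inl i => exact i.elim0
  | inr j => exact j.elim0

theorem top_rel {α : Type*} (x y : α) : (⊤ : Setoid α).r x y := trivial

theorem idPart_one : idPart 1 = (⊤ : Setoid (Pt 1 1)) := by
  refine Setoid.ext fun x y => ⟨fun _ => trivial, fun _ => ?_⟩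
  show pv x = pv y
  rcases x with i | i <;> rcases y with j | j <;>
    simp [Fin.ext_iff] <;> omega

theorem tensor_idPart (n : ℕ) : tensorPart (idPart n) (idPart 1) = idPart (n + 1) := by
  refine Setoid.ext fun x y => (tensorPart_rel_iff _ _ x y).trans ?_
  constructor
  · rintro (⟨a, b, h, rfl, rfl⟩ | ⟨a, b, h, rfl, rfl⟩) <;>
      [skip; skip] <;>
      rcases a with i | i <;> rcases b with j | j <;>
      simp_all [idPart_rel, pv] <;> omega
  · intro h
    rcases pt_cases x with (⟨a, rfl⟩ | ⟨a, rfl⟩) <;> rcases pt_cases y with (⟨b, rfl⟩ | ⟨b, rfl⟩)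
    · exact Or.inl ⟨a, b, by
        rcases a with i | i <;> rcases b with j | j <;>
          (have := i.isLt; have := j.isLt) <;> simp_all [idPart_rel, pv], rfl, rfl⟩
    · exfalso
      rcases a with i | i <;> rcases b with j | j <;>
        (have := i.isLt; have := j.isLt) <;> simp_all [idPart_rel, pv] <;> omega
    · exfalso
      rcases a with i | i <;> rcases b with j | j <;>
        (have := i.isLt; have := j.isLt) <;> simp_all [idPart_rel, pv] <;> omega
    · exact Or.inr ⟨a, b, by
        rcases a with i | i <;> rcases b with j | j <;>
          (have := i.isLt; have := j.isLt) <;> simp_all [idPart_rel, pv] <;> omega, rfl, rfl⟩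

theorem genNC_idPart : ∀ n, GenNC (idPart n)
  | 0 => genNC_empty _
  | 1 => genNC_eq GenNC.id idPart_one.symm
  | (n + 1) => genNC_eq (GenNC.tensor (genNC_idPart n) (genNC_eq GenNC.id idPart_one.symm))
      (tensor_idPart n)

/-- The generating relation of a joint setoid. -/
def jRel {k l w : ℕ} (p : Setoid (Pt k l)) (q : Setoid (Pt l w)) (x y : X3 k l w) : Prop :=
  (∃ a b, p.r a b ∧ x = upEmb a ∧ y = upEmb b) ∨
  (∃ a b, q.r a b ∧ x = loEmb a ∧ y = loEmb b)

theorem jointSetoid_rel {k l w : ℕ} (p : Setoid (Pt k l)) (q : Setoid (Pt l w))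
    (x y : X3 k l w) : (jointSetoid p q).r x y ↔ Relation.EqvGen (jRel p q) x y := Iff.rfl

theorem compPart_rel {k l w : ℕ} (p : Setoid (Pt k l)) (q : Setoid (Pt l w))
    (x y : Pt k w) :
    (compPart p q).r x y ↔ Relation.EqvGen (jRel p q) (outEmb x) (outEmb y) := Iff.rfl

theorem jrel_up {k l w : ℕ} {p : Setoid (Pt k l)} {q : Setoid (Pt l w)} {a b : Pt k l}
    (h : p.r a b) : Relation.EqvGen (jRel p q) (upEmb a) (upEmb b) :=
  EqvGen.rel _ _ (Or.inl ⟨a, b, h, rfl, rfl⟩)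

theorem jrel_lo {k l w : ℕ} {p : Setoid (Pt k l)} {q : Setoid (Pt l w)} {a b : Pt l w}
    (h : q.r a b) : Relation.EqvGen (jRel p q) (loEmb a) (loEmb b) :=
  EqvGen.rel _ _ (Or.inr ⟨a, b, h, rfl, rfl⟩)

end Aux2
section EmbSimp
@[simp] theorem upEmb_inl {k l w : ℕ} (i : Fin k) :
    (upEmb (Sum.inl i) : X3 k l w) = Sum.inl i := rfl
@[simp] theorem upEmb_inr {k l w : ℕ} (j : Fin l) :
    (upEmb (Sum.inr j) : X3 k l w) = Sum.inr (Sum.inl j) := rfl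
@[simp] theorem loEmb_inl {k l w : ℕ} (j : Fin l) :
    (loEmb (Sum.inl j) : X3 k l w) = Sum.inr (Sum.inl j) := rfl
@[simp] theorem loEmb_inr {k l w : ℕ} (j : Fin w) :
    (loEmb (Sum.inr j) : X3 k l w) = Sum.inr (Sum.inr j) := rfl
@[simp] theorem outEmb_inl {k l w : ℕ} (i : Fin k) :
    (outEmb (Sum.inl i) : X3 k l w) = Sum.inl i := rfl
@[simp] theorem outEmb_inr {k l w : ℕ} (j : Fin w) :
    (outEmb (Sum.inr j) : X3 k l w) = Sum.inr (Sum.inr j) := rfl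
end EmbSimp
section Aux3
open Relation

theorem genNC_fork : GenNC (⊤ : Setoid (Pt 1 2)) :=
  genNC_eq (GenNC.adj GenNC.mult) adjPart_top

theorem genNC_topBlock : ∀ m, GenNC (⊤ : Setoid (Pt 0 (m + 1)))
  | 0 => GenNC.unit
  | (m + 1) => by
    set E := tensorPart (idPart m) (⊤ : Setoid (Pt 1 2)) with hEdef
    have hE : GenNC E := GenNC.tensor (genNC_idPart m) genNC_fork
    have hcomp := GenNC.comp (genNC_topBlock m) hE
    refine genNC_eq hcomp (Setoid.ext fun x y => ⟨fun _ => trivial, fun _ => ?_⟩)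
    -- everything is joint-related to the middle point 0
    have hmid : ∀ z : X3 0 (m + 1) (m + 2),
        Relation.EqvGen (jRel (⊤ : Setoid (Pt 0 (m + 1))) E) z
          (Sum.inr (Sum.inl (0 : Fin (m + 1)))) := by
      intro z
      rcases z with i | t | u
      · exact i.elim0
      · exact jrel_up (p := (⊤ : Setoid (Pt 0 (m+1)))) (q := E)
          (a := Sum.inr t) (b := Sum.inr 0) trivial
      · have hu := u.isLt
        rcases lt_or_ge (u : ℕ) m with h | h
        · -- via the identity strand u
          refine EqvGen.trans _ _ _
            (EqvGen.rel _ _ (Or.inr ⟨Sum.inr u, Sum.inl ⟨(u : ℕ), by omega⟩, ?_, rfl, rfl⟩))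
            (jrel_up (a := Sum.inr ⟨(u : ℕ), by omega⟩) (b := Sum.inr 0) trivial)
          refine (tensorPart_rel_iff _ _ _ _).2
            (Or.inl ⟨Sum.inr ⟨(u : ℕ), h⟩, Sum.inl ⟨(u : ℕ), h⟩, rfl, ?_, ?_⟩) <;>
            simp [Fin.ext_iff]
        · -- via the fork block
          refine EqvGen.trans _ _ _
            (EqvGen.rel _ _ (Or.inr ⟨Sum.inr u, Sum.inl ⟨m, by omega⟩, ?_, rfl, rfl⟩))
            (jrel_up (a := Sum.inr ⟨m, by omega⟩) (b := Sum.inr 0) trivial)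
          refine (tensorPart_rel_iff _ _ _ _).2
            (Or.inr ⟨Sum.inr ⟨(u : ℕ) - m, by omega⟩, Sum.inl 0, trivial, ?_, ?_⟩) <;>
            simp [Fin.ext_iff] <;> omega
    exact (hmid (outEmb x)).trans _ _ _ ((hmid (outEmb y)).symm _ _)

end Aux3
section Aux4
open Relation

theorem noncrossing_comap {k l k' l' : ℕ} (g : Pt k' l' → Pt k l)
    (hg : ∀ x y : Pt k' l', ptIdx x < ptIdx y → ptIdx (g x) < ptIdx (g y))
    {p : Setoid (Pt k l)} (hp : Noncrossing p) : Noncrossing (Setoid.comap g p) :=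
  fun a b x y h1 h2 h3 hax hby =>
    hp (g a) (g b) (g x) (g y) (hg _ _ h1) (hg _ _ h2) (hg _ _ h3) hax hby

/-- Rotation map: sends a point of the `(k, l+1)`-frame to the `(k+1, l)`-frame,
the extra lower point going to the extra upper point. -/
def rmap {k l : ℕ} : Pt k (l + 1) → Pt (k + 1) l := fun x =>
  match x with
  | Sum.inl i => Sum.inl i.castSucc
  | Sum.inr j => if h : (j : ℕ) < l then Sum.inr ⟨j, h⟩ else Sum.inl (Fin.last k)

theorem rmap_inl {k l : ℕ} (i : Fin k) : (rmap (Sum.inl i) : Pt (k + 1) l) = Sum.inl i.castSucc := rfl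
theorem rmap_inr {k l : ℕ} (j : Fin (l + 1)) : (rmap (Sum.inr j) : Pt (k + 1) l)
    = if h : (j : ℕ) < l then Sum.inr ⟨j, h⟩ else Sum.inl (Fin.last k) := rfl

theorem ptIdx_rmap {k l : ℕ} (x : Pt k (l + 1)) : ptIdx (rmap x) = ptIdx x := by
  rcases x with i | j
  · rfl
  · have hj := j.isLt
    rw [rmap_inr]
    by_cases h : (j : ℕ) < l <;> simp [h, ptIdx, Fin.last] <;> omega

/-- The rotated partition. -/
def rotPart {k l : ℕ} (p : Setoid (Pt (k + 1) l)) : Setoid (Pt k (l + 1)) :=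
  Setoid.comap rmap p

theorem rotPart_rel {k l : ℕ} (p : Setoid (Pt (k + 1) l)) (x y : Pt k (l + 1)) :
    (rotPart p).r x y ↔ p.r (rmap x) (rmap y) := Iff.rfl

theorem noncrossing_rotPart {k l : ℕ} {p : Setoid (Pt (k + 1) l)} (hp : Noncrossing p) :
    Noncrossing (rotPart p) :=
  noncrossing_comap rmap (fun x y h => by rwa [ptIdx_rmap, ptIdx_rmap]) hp

/-- Retraction used in the analysis of the rotation decomposition. -/
def rotF {k l : ℕ} : X3 (k + 1) (l + 2) l → Pt k (l + 1) := fun z =>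
  match z with
  | Sum.inl i => if h : (i : ℕ) < k then Sum.inl ⟨i, h⟩ else Sum.inr (Fin.last l)
  | Sum.inr (Sum.inl m) => Sum.inr ⟨min (m : ℕ) l, by omega⟩
  | Sum.inr (Sum.inr j) => Sum.inr ⟨(j : ℕ), Nat.lt_succ_of_lt j.isLt⟩

theorem rotF_top {k l : ℕ} (i : Fin (k + 1)) : (rotF (Sum.inl i) : Pt k (l + 1))
    = if h : (i : ℕ) < k then Sum.inl ⟨i, h⟩ else Sum.inr (Fin.last l) := rfl
theorem rotF_mid {k l : ℕ} (m : Fin (l + 2)) : (rotF (Sum.inr (Sum.inl m)) : Pt k (l + 1))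
    = Sum.inr ⟨min (m : ℕ) l, by omega⟩ := rfl
theorem rotF_bot {k l : ℕ} (j : Fin l) : (rotF (Sum.inr (Sum.inr j)) : Pt k (l + 1))
    = Sum.inr ⟨(j : ℕ), Nat.lt_succ_of_lt j.isLt⟩ := rfl

/-- Section of `rotF`. -/
def rotG {k l : ℕ} : Pt k (l + 1) → X3 (k + 1) (l + 2) l := fun a =>
  upEmb (tleft (v := 1) (w := 1) a)

theorem rotG_inl {k l : ℕ} (i : Fin k) :
    (rotG (Sum.inl i) : X3 (k + 1) (l + 2) l) = Sum.inl (Fin.castAdd 1 i) := rfl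
theorem rotG_inr {k l : ℕ} (j : Fin (l + 1)) :
    (rotG (Sum.inr j) : X3 (k + 1) (l + 2) l) = Sum.inr (Sum.inl (Fin.castAdd 1 j)) := rfl

theorem rot_decomp {k l : ℕ} (p : Setoid (Pt (k + 1) l)) :
    compPart (k := k + 1) (l := l + 2) (w := l)
      (tensorPart (k := k) (l := l + 1) (v := 1) (w := 1) (rotPart p) (idPart 1))
      (tensorPart (k := l) (l := l) (v := 2) (w := 0) (idPart l) (⊤ : Setoid (Pt 2 0)))
      = p := by
  set A := tensorPart (k := k) (l := l + 1) (v := 1) (w := 1) (rotPart p) (idPart 1) with hA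
  set B := tensorPart (k := l) (l := l) (v := 2) (w := 0) (idPart l) (⊤ : Setoid (Pt 2 0)) with hB
  set q := rotPart p with hq
  have h1 : ∀ x y, jRel (k := k + 1) (l := l + 2) (w := l) A B x y →
      q.r (rotF x) (rotF y) := by
    rintro x y (⟨a, b, h, rfl, rfl⟩ | ⟨a, b, h, rfl, rfl⟩)
    · -- generator coming from A
      rcases (tensorPart_rel_iff _ _ _ _).1 h with ⟨a', b', h', rfl, rfl⟩ | ⟨a', b', h', rfl, rfl⟩
      · have key : ∀ z : Pt k (l + 1), rotF (upEmb (tleft (v := 1) (w := 1) z)) = z := by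
          rintro (i | j)
          · have hi := i.isLt
            simp only [tleft_inl, upEmb_inl, rotF_top]
            rw [dif_pos (by simpa using hi)]
            exact congrArg Sum.inl (Fin.ext (by simp))
          · have hj := j.isLt
            simp only [tleft_inr, upEmb_inr, rotF_mid]
            simp only [Sum.inr.injEq, Fin.ext_iff, Fin.coe_castAdd]
            omega
        rw [key, key]; exact h'
      · have key : ∀ z : Pt 1 1, rotF (upEmb (tright (k := k) (l := l + 1) (v := 1) (w := 1) z))
            = Sum.inr (Fin.last l) := by
          rintro (i | j)
          · simp only [tright_inl, upEmb_inl, rotF_top]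
            rw [dif_neg (by simp only [Fin.coe_natAdd]; omega)]
          · simp only [tright_inr, upEmb_inr, rotF_mid]
            simp only [Sum.inr.injEq, Fin.ext_iff, Fin.coe_natAdd, Fin.val_eq_zero, Fin.last]
            omega
        rw [key, key]
        try exact q.iseqv.refl _
    · -- generator coming from B
      rcases (tensorPart_rel_iff _ _ _ _).1 h with ⟨a', b', h', rfl, rfl⟩ | ⟨a', b', h', rfl, rfl⟩
      · have key : ∀ z : Pt l l, rotF (loEmb (k := k + 1) (tleft (k := l) (l := l) (v := 2) (w := 0) z))
            = Sum.inr ⟨pv z, by rcases z with t | t <;>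
                exact Nat.lt_succ_of_lt t.isLt⟩ := by
          rintro (t | t)
          · have := t.isLt
            simp only [tleft_inl, loEmb_inl, rotF_mid, Sum.inr.injEq, Fin.ext_iff,
              Fin.coe_castAdd, pv_inl]
            omega
          · simp only [tleft_inr, loEmb_inr, rotF_bot, Sum.inr.injEq, Fin.ext_iff,
              Fin.coe_castAdd, pv_inr]
        rw [key, key]
        have hv : pv a' = pv b' := h'
        simp only [hv]
        exact q.iseqv.refl _
      · have key : ∀ z : Pt 2 0, rotF (loEmb (k := k + 1) (tright (k := l) (l := l) (v := 2) (w := 0) z))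
            = Sum.inr (Fin.last l) := by
          rintro (t | t)
          · have := t.isLt
            simp only [tright_inl, loEmb_inl, rotF_mid, Sum.inr.injEq, Fin.ext_iff,
              Fin.coe_natAdd, Fin.last]
            omega
          · exact t.elim0
        rw [key, key]
        try exact q.iseqv.refl _
  have h3 : ∀ a b : Pt k (l + 1), q.r a b →
      Relation.EqvGen (jRel (k := k + 1) (l := l + 2) (w := l) A B) (rotG a) (rotG b) :=
    fun a b h => jrel_up ((tensorPart_rel_iff _ _ _ _).2 (Or.inl ⟨a, b, h, rfl, rfl⟩))
  have cap_link : Relation.EqvGen (jRel (k := k + 1) (l := l + 2) (w := l) A B)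
      (Sum.inr (Sum.inl ⟨l + 1, by omega⟩)) (Sum.inr (Sum.inl ⟨l, by omega⟩)) := by
    refine EqvGen.rel _ _ (Or.inr ⟨Sum.inl ⟨l + 1, by omega⟩, Sum.inl ⟨l, by omega⟩, ?_, rfl, rfl⟩)
    refine (tensorPart_rel_iff _ _ _ _).2 (Or.inr ⟨Sum.inl 1, Sum.inl 0, trivial, ?_, ?_⟩) <;>
      simp [Fin.ext_iff]
  have h2 : ∀ x, Relation.EqvGen (jRel (k := k + 1) (l := l + 2) (w := l) A B)
      x (rotG (rotF x)) := by
    rintro (i | m | j)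
    · by_cases h : (i : ℕ) < k
      · rw [show rotG (rotF (Sum.inl i : X3 (k + 1) (l + 2) l)) = Sum.inl i from by
          rw [rotF_top, dif_pos h, rotG_inl]; simp [Fin.ext_iff]]
        exact EqvGen.refl _
      · have hi : (i : ℕ) = k := by have := i.isLt; omega
        rw [show rotG (rotF (Sum.inl i : X3 (k + 1) (l + 2) l))
            = Sum.inr (Sum.inl ⟨l, by omega⟩) from by
          rw [rotF_top, dif_neg h, rotG_inr]; simp [Fin.ext_iff, Fin.last]]
        refine EqvGen.trans _ _ _ ?_ cap_link
        refine EqvGen.rel _ _ (Or.inl ⟨Sum.inl i, Sum.inr ⟨l + 1, by omega⟩, ?_, rfl, rfl⟩)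
        refine (tensorPart_rel_iff _ _ _ _).2 (Or.inr ⟨Sum.inl 0, Sum.inr 0, rfl, ?_, ?_⟩) <;>
          simp [Fin.ext_iff] <;> try omega
    · have hm := m.isLt
      by_cases h : (m : ℕ) < l + 1
      · rw [show rotG (rotF (Sum.inr (Sum.inl m) : X3 (k + 1) (l + 2) l)) = Sum.inr (Sum.inl m)
            from by rw [rotF_mid, rotG_inr]; simp [Fin.ext_iff]; try omega]
        exact EqvGen.refl _
      · have hm' : (m : ℕ) = l + 1 := by omega
        rw [show rotG (rotF (Sum.inr (Sum.inl m) : X3 (k + 1) (l + 2) l))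
            = Sum.inr (Sum.inl ⟨l, by omega⟩) from by
          rw [rotF_mid, rotG_inr]; simp [Fin.ext_iff]; try omega]
        rw [show (Sum.inr (Sum.inl m) : X3 (k + 1) (l + 2) l)
            = Sum.inr (Sum.inl ⟨l + 1, by omega⟩) from by simp [Fin.ext_iff]; try omega]
        exact cap_link
    · rw [show rotG (rotF (Sum.inr (Sum.inr j) : X3 (k + 1) (l + 2) l))
          = Sum.inr (Sum.inl ⟨(j : ℕ), by have := j.isLt; omega⟩) from by
        rw [rotF_bot, rotG_inr]; simp [Fin.ext_iff]]
      refine EqvGen.rel _ _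
        (Or.inr ⟨Sum.inr j, Sum.inl ⟨(j : ℕ), by have := j.isLt; omega⟩, ?_, rfl, rfl⟩)
      refine (tensorPart_rel_iff _ _ _ _).2
        (Or.inl ⟨Sum.inr j, Sum.inl ⟨(j : ℕ), j.isLt⟩, rfl, ?_, ?_⟩) <;> simp [Fin.ext_iff]
  refine Setoid.ext fun x y => ((eqvGen_iff_section _ q rotF rotG h1 h2 h3
    (outEmb x) (outEmb y)).trans ?_)
  have key : ∀ z : Pt (k + 1) l, rmap (rotF (outEmb z)) = z := by
    rintro (i | j)
    · by_cases h : (i : ℕ) < k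
      · rw [outEmb_inl, rotF_top, dif_pos h, rmap_inl]
        simp [Fin.ext_iff]
      · have hi : (i : ℕ) = k := by have := i.isLt; omega
        rw [outEmb_inl, rotF_top, dif_neg h, rmap_inr,
          dif_neg (by simp [Fin.last]), ]
        simp [Fin.ext_iff, Fin.last, hi]
    · have := j.isLt
      rw [outEmb_inr, rotF_bot, rmap_inr, dif_pos (by simpa using this)]
  show p.r (rmap (rotF (outEmb x))) (rmap (rotF (outEmb y))) ↔ p.r x y
  rw [key, key]

end Aux4
section Aux5
open Relation

theorem nc_line {n : ℕ} {p : Setoid (Pt 0 n)} (hp : Noncrossing p)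
    (u1 u2 u3 u4 : Fin n) (h12 : (u1 : ℕ) < u2) (h23 : (u2 : ℕ) < u3) (h34 : (u3 : ℕ) < u4)
    (h13 : p.r (Sum.inr u1) (Sum.inr u3)) (h24 : p.r (Sum.inr u2) (Sum.inr u4)) :
    p.r (Sum.inr u3) (Sum.inr u4) := by
  have := u4.isLt
  have key := hp (Sum.inr u4) (Sum.inr u3) (Sum.inr u2) (Sum.inr u1)
    (by simp [ptIdx]; omega) (by simp [ptIdx]; omega) (by simp [ptIdx]; omega)
    (p.iseqv.symm h24) (p.iseqv.symm h13)
  exact p.iseqv.symm key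

theorem exists_interval_block {n : ℕ} (p : Setoid (Pt 0 (n + 1))) (hp : Noncrossing p) :
    ∃ lo hi : ℕ, lo ≤ hi ∧ hi < n + 1 ∧
      (∀ s t : Fin (n + 1), lo ≤ (s : ℕ) → (s : ℕ) ≤ hi → lo ≤ (t : ℕ) → (t : ℕ) ≤ hi →
        p.r (Sum.inr s) (Sum.inr t)) ∧
      (∀ s t : Fin (n + 1), lo ≤ (s : ℕ) → (s : ℕ) ≤ hi → p.r (Sum.inr s) (Sum.inr t) →
        lo ≤ (t : ℕ) ∧ (t : ℕ) ≤ hi) := by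
  classical
  -- the class of a point, as a finset
  set C : Fin (n + 1) → Finset (Fin (n + 1)) :=
    fun t => Finset.univ.filter (fun u => p.r (Sum.inr t) (Sum.inr u)) with hC
  have hmem : ∀ t u, u ∈ C t ↔ p.r (Sum.inr t) (Sum.inr u) := by
    intro t u; simp [hC]
  have hne : ∀ t, (C t).Nonempty := fun t => ⟨t, (hmem t t).2 (p.iseqv.refl _)⟩
  set spread : Fin (n + 1) → ℕ :=
    fun t => ((C t).max' (hne t) : ℕ) - ((C t).min' (hne t) : ℕ) with hspread
  obtain ⟨t₀, -, hmin⟩ := Finset.exists_min_image Finset.univ spread Finset.univ_nonempty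
  set mn := (C t₀).min' (hne t₀) with hmn
  set mx := (C t₀).max' (hne t₀) with hmx
  have hmn_mem : p.r (Sum.inr t₀) (Sum.inr mn) := (hmem _ _).1 ((C t₀).min'_mem (hne t₀))
  have hmx_mem : p.r (Sum.inr t₀) (Sum.inr mx) := (hmem _ _).1 ((C t₀).max'_mem (hne t₀))
  -- every point between mn and mx is in the class of t₀
  have hint : ∀ z : Fin (n + 1), (mn : ℕ) ≤ z → (z : ℕ) ≤ mx → p.r (Sum.inr t₀) (Sum.inr z) := by
    intro z hz1 hz2
    by_contra hz
    have hzmn : (mn : ℕ) < z := by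
      rcases Nat.lt_or_ge (mn : ℕ) z with h | h
      · exact h
      · exact absurd (by rw [show z = mn from Fin.ext (by omega)]; exact hmn_mem) hz
    have hzmx : (z : ℕ) < mx := by
      rcases Nat.lt_or_ge (z : ℕ) (mx : ℕ) with h | h
      · exact h
      · exact absurd (by rw [show z = mx from Fin.ext (by omega)]; exact hmx_mem) hz
    have hmnmx : p.r (Sum.inr mn) (Sum.inr mx) := p.iseqv.trans (p.iseqv.symm hmn_mem) hmx_mem
    -- the class of z is strictly inside (mn, mx)
    have hclz : ∀ w : Fin (n + 1), p.r (Sum.inr z) (Sum.inr w) →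
        (mn : ℕ) < w ∧ (w : ℕ) < mx := by
      intro w hw
      have hwne1 : (w : ℕ) ≠ (mn : ℕ) := by
        intro he
        exact hz (p.iseqv.trans hmn_mem (p.iseqv.symm (by
          rwa [show w = mn from Fin.ext he] at hw)))
      have hwne2 : (w : ℕ) ≠ (mx : ℕ) := by
        intro he
        exact hz (p.iseqv.trans hmx_mem (p.iseqv.symm (by
          rwa [show w = mx from Fin.ext he] at hw)))
      constructor
      · rcases Nat.lt_or_ge (mn : ℕ) w with h | h
        · exact h
        · -- w < mn : crossing w < mn < z < mx
          exfalso
          have hwmn : (w : ℕ) < mn := by omega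
          have := nc_line hp w mn z mx hwmn hzmn hzmx (p.iseqv.symm hw) hmnmx
          exact hz (p.iseqv.trans hmx_mem (p.iseqv.symm this))
      · rcases Nat.lt_or_ge (w : ℕ) (mx : ℕ) with h | h
        · exact h
        · exfalso
          have hwmx : (mx : ℕ) < w := by omega
          have := nc_line hp mn z mx w hzmn hzmx hwmx hmnmx hw
          -- this : mx ~ w ; so z ~ w ~ mx ~ t₀, contradiction
          exact hz (p.iseqv.trans hmx_mem
            (p.iseqv.symm (p.iseqv.trans hw (p.iseqv.symm this))))
    -- so the spread of z is smaller
    have h1 : (mn : ℕ) < ((C z).min' (hne z) : ℕ) :=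
      (hclz _ ((hmem _ _).1 ((C z).min'_mem (hne z)))).1
    have h2 : ((C z).max' (hne z) : ℕ) < (mx : ℕ) :=
      (hclz _ ((hmem _ _).1 ((C z).max'_mem (hne z)))).2
    have h3 : ((C z).min' (hne z) : ℕ) ≤ ((C z).max' (hne z) : ℕ) :=
      Finset.min'_le _ _ ((C z).max'_mem (hne z))
    have h4 : spread t₀ ≤ spread z := hmin z (Finset.mem_univ z)
    have h5 : spread t₀ = (mx : ℕ) - (mn : ℕ) := rfl
    have h6 : spread z = ((C z).max' (hne z) : ℕ) - ((C z).min' (hne z) : ℕ) := rfl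
    omega
  refine ⟨(mn : ℕ), (mx : ℕ), ?_, mx.isLt, ?_, ?_⟩
  · exact Finset.min'_le _ _ ((C t₀).max'_mem (hne t₀))
  · intro s t hs1 hs2 ht1 ht2
    exact p.iseqv.trans (p.iseqv.symm (hint s hs1 hs2)) (hint t ht1 ht2)
  · intro s t hs1 hs2 hst
    have hts : p.r (Sum.inr t₀) (Sum.inr t) := p.iseqv.trans (hint s hs1 hs2) hst
    have htmem : t ∈ C t₀ := (hmem _ _).2 hts
    exact ⟨Finset.min'_le _ _ htmem, Finset.le_max' _ _ htmem⟩

end Aux5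
section Aux6
open Relation

/-- Map inserting `m+1` points at position `i`. -/
def insMap {i m j : ℕ} : Pt 0 (i + j) → Pt 0 (i + (m + 1) + j) := fun x =>
  match x with
  | Sum.inl z => z.elim0
  | Sum.inr t => Sum.inr ⟨if (t : ℕ) < i then (t : ℕ) else (t : ℕ) + (m + 1), by
      have := t.isLt; split <;> omega⟩

theorem insMap_inr {i m j : ℕ} (t : Fin (i + j)) :
    (insMap (Sum.inr t) : Pt 0 (i + (m + 1) + j)) = Sum.inr ⟨if (t : ℕ) < i then (t : ℕ)
      else (t : ℕ) + (m + 1), by have := t.isLt; split <;> omega⟩ := rfl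

theorem noncrossing_insMap {i m j : ℕ} {p : Setoid (Pt 0 (i + (m + 1) + j))}
    (hp : Noncrossing p) : Noncrossing (Setoid.comap (insMap (m := m)) p) := by
  refine noncrossing_comap _ (fun x y h => ?_) hp
  rcases x with z | t
  · exact z.elim0
  rcases y with z | u
  · exact z.elim0
  have := t.isLt; have := u.isLt
  simp only [insMap_inr, ptIdx, Sum.elim_inr] at h ⊢
  split_ifs <;> omega

/-- Retraction for the interval-removal decomposition. -/
def remF {i m j : ℕ} : X3 0 (i + j) (i + (m + 1) + j) → Pt 0 (i + (m + 1) + j) := fun z =>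
  match z with
  | Sum.inl z => z.elim0
  | Sum.inr (Sum.inl t) => insMap (Sum.inr t)
  | Sum.inr (Sum.inr u) => Sum.inr u

/-- Section for the interval-removal decomposition. -/
def remG {i m j : ℕ} : Pt 0 (i + (m + 1) + j) → X3 0 (i + j) (i + (m + 1) + j) := fun a =>
  match a with
  | Sum.inl z => z.elim0
  | Sum.inr u => Sum.inr (Sum.inr u)

theorem remF_mid {i m j : ℕ} (t : Fin (i + j)) :
    (remF (Sum.inr (Sum.inl t)) : Pt 0 (i + (m + 1) + j)) = insMap (Sum.inr t) := rfl
theorem remF_bot {i m j : ℕ} (u : Fin (i + (m + 1) + j)) :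
    (remF (Sum.inr (Sum.inr u)) : Pt 0 (i + (m + 1) + j)) = Sum.inr u := rfl

theorem interval_decomp {i m j : ℕ} (p : Setoid (Pt 0 (i + (m + 1) + j)))
    (hblk : ∀ s t : Fin (i + (m + 1) + j), i ≤ (s : ℕ) → (s : ℕ) < i + (m + 1) →
      i ≤ (t : ℕ) → (t : ℕ) < i + (m + 1) → p.r (Sum.inr s) (Sum.inr t))
    (hcl : ∀ s t : Fin (i + (m + 1) + j), i ≤ (s : ℕ) → (s : ℕ) < i + (m + 1) →
      p.r (Sum.inr s) (Sum.inr t) → i ≤ (t : ℕ) ∧ (t : ℕ) < i + (m + 1)) :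
    compPart (k := 0) (l := i + j) (w := i + (m + 1) + j)
      (Setoid.comap (insMap (m := m)) p)
      (tensorPart (k := i + 0) (l := i + (m + 1)) (v := j) (w := j)
        (tensorPart (k := i) (l := i) (v := 0) (w := m + 1)
          (idPart i) (⊤ : Setoid (Pt 0 (m + 1))))
        (idPart j)) = p := by
  set q := Setoid.comap (insMap (m := m)) p with hq
  set E1 := tensorPart (k := i) (l := i) (v := 0) (w := m + 1)
    (idPart i) (⊤ : Setoid (Pt 0 (m + 1))) with hE1
  set E := tensorPart (k := i + 0) (l := i + (m + 1)) (v := j) (w := j) E1 (idPart j) with hE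
  -- the link from a middle point to its image at the bottom
  have hlink : ∀ t : Fin (i + j),
      Relation.EqvGen (jRel (k := 0) (l := i + j) (w := i + (m + 1) + j) q E)
        (Sum.inr (Sum.inl t)) (remG (insMap (Sum.inr t))) := by
    intro t
    have ht' := t.isLt
    refine EqvGen.rel _ _ (Or.inr ⟨Sum.inl t, Sum.inr ⟨_, _⟩, ?_, rfl, rfl⟩)
    by_cases ht : (t : ℕ) < i
    · refine (tensorPart_rel_iff _ _ _ _).2 (Or.inl ⟨Sum.inl ⟨(t : ℕ), by omega⟩,
        Sum.inr ⟨(t : ℕ), by omega⟩, ?_, ?_, ?_⟩)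
      · refine (tensorPart_rel_iff _ _ _ _).2 (Or.inl ⟨Sum.inl ⟨(t : ℕ), ht⟩,
          Sum.inr ⟨(t : ℕ), ht⟩, rfl, ?_, ?_⟩) <;> simp [Fin.ext_iff]
      · simp [Fin.ext_iff]
      · simp [Fin.ext_iff]; omega
    · refine (tensorPart_rel_iff _ _ _ _).2 (Or.inr ⟨Sum.inl ⟨(t : ℕ) - i, by omega⟩,
        Sum.inr ⟨(t : ℕ) - i, by omega⟩, rfl, ?_, ?_⟩) <;> simp [Fin.ext_iff, ht] <;> omega
  -- the link between two bottom points of the inserted block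
  have hblock_link : ∀ u u' : Fin (i + (m + 1) + j), i ≤ (u : ℕ) → (u : ℕ) < i + (m + 1) →
      i ≤ (u' : ℕ) → (u' : ℕ) < i + (m + 1) →
      Relation.EqvGen (jRel (k := 0) (l := i + j) (w := i + (m + 1) + j) q E)
        (Sum.inr (Sum.inr u)) (Sum.inr (Sum.inr u')) := by
    intro u u' h1 h2 h3 h4
    refine EqvGen.rel _ _ (Or.inr ⟨Sum.inr u, Sum.inr u', ?_, rfl, rfl⟩)
    refine (tensorPart_rel_iff _ _ _ _).2 (Or.inl ⟨Sum.inr ⟨(u : ℕ), by omega⟩,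
      Sum.inr ⟨(u' : ℕ), by omega⟩, ?_, ?_, ?_⟩)
    · refine (tensorPart_rel_iff _ _ _ _).2 (Or.inr ⟨Sum.inr ⟨(u : ℕ) - i, by omega⟩,
        Sum.inr ⟨(u' : ℕ) - i, by omega⟩, trivial, ?_, ?_⟩) <;> simp [Fin.ext_iff] <;> omega
    · simp [Fin.ext_iff]
    · simp [Fin.ext_iff]
  have h1 : ∀ x y, jRel (k := 0) (l := i + j) (w := i + (m + 1) + j) q E x y →
      p.r (remF x) (remF y) := by
    rintro x y (⟨a, b, h, rfl, rfl⟩ | ⟨a, b, h, rfl, rfl⟩)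
    · rcases a with z | t
      · exact z.elim0
      rcases b with z | t'
      · exact z.elim0
      exact h
    · rcases (tensorPart_rel_iff _ _ _ _).1 h with ⟨a', b', h', rfl, rfl⟩ | ⟨a', b', h', rfl, rfl⟩
      · rcases (tensorPart_rel_iff _ _ _ _).1 h' with ⟨c, d, hcd, rfl, rfl⟩ | ⟨c, d, hcd, rfl, rfl⟩
        · -- identity strands on the left
          have key : ∀ c : Pt i i, remF (loEmb (tleft (tleft (v := 0) (w := m + 1) c)))
              = (Sum.inr ⟨pv c, by rcases c with e | e <;> (have := e.isLt; first | omega | (simp [pv]; omega) | simp [pv])⟩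
                : Pt 0 (i + (m + 1) + j)) := by
            rintro (e | e)
            · have he := e.isLt
              simp [tleft_inl, loEmb_inl, remF_mid, insMap_inr, Sum.inr.injEq,
                Fin.ext_iff, Fin.coe_castAdd, pv, he]
            · simp only [tleft_inr, loEmb_inr, remF_bot, Sum.inr.injEq, Fin.ext_iff,
                Fin.coe_castAdd, pv_inr]
          rw [key, key]
          have hv : pv c = pv d := hcd
          simp only [hv]
          exact p.iseqv.refl _
        · -- the inserted block
          rcases c with z | e
          · exact z.elim0
          rcases d with z | e'
          · exact z.elim0
          have he := e.isLt; have he' := e'.isLt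
          have key : ∀ e : Fin (m + 1), remF (loEmb (tleft (k := i + 0) (l := i + (m + 1))
              (v := j) (w := j) (tright (k := i) (l := i) (v := 0) (w := m + 1)
              (Sum.inr e)))) = (Sum.inr ⟨i + (e : ℕ), by have := e.isLt; omega⟩
                : Pt 0 (i + (m + 1) + j)) := by
            intro e
            simp only [tright_inr, tleft_inr, loEmb_inr, remF_bot, Sum.inr.injEq,
              Fin.ext_iff, Fin.coe_castAdd, Fin.coe_natAdd]
          rw [key, key]
          exact hblk _ _ (Nat.le_add_right i (e : ℕ))
            (by show i + (e : ℕ) < i + (m + 1); omega)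
            (Nat.le_add_right i (e' : ℕ))
            (by show i + (e' : ℕ) < i + (m + 1); omega)
      · -- identity strands on the right
        have key : ∀ c : Pt j j, remF (loEmb (tright (k := i + 0) (l := i + (m + 1)) c))
            = (Sum.inr ⟨i + (m + 1) + pv c, by rcases c with e | e <;>
                (have := e.isLt; first | omega | (simp [pv]; omega) | simp [pv])⟩ : Pt 0 (i + (m + 1) + j)) := by
          rintro (e | e)
          · have he := e.isLt
            simp [tright_inl, loEmb_inl, remF_mid, insMap_inr, Sum.inr.injEq,
              Fin.ext_iff, Fin.coe_natAdd, pv]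
            first
            | omega
            | (split <;> omega)
          · simp only [tright_inr, loEmb_inr, remF_bot, Sum.inr.injEq, Fin.ext_iff,
              Fin.coe_natAdd, pv_inr]
        rw [key, key]
        have hv : pv a' = pv b' := h'
        simp only [hv]
        exact p.iseqv.refl _
  have h2 : ∀ x, Relation.EqvGen (jRel (k := 0) (l := i + j) (w := i + (m + 1) + j) q E)
      x (remG (remF x)) := by
    rintro (z | t | u)
    · exact z.elim0
    · exact hlink t
    · exact EqvGen.refl _
  have h3 : ∀ a b : Pt 0 (i + (m + 1) + j), p.r a b →
      Relation.EqvGen (jRel (k := 0) (l := i + j) (w := i + (m + 1) + j) q E)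
        (remG a) (remG b) := by
    rintro (z | u) b h
    · exact z.elim0
    rcases b with z | u'
    · exact z.elim0
    have hu := u.isLt; have hu' := u'.isLt
    by_cases hub : i ≤ (u : ℕ) ∧ (u : ℕ) < i + (m + 1)
    · obtain ⟨h1', h2'⟩ := hcl u u' hub.1 hub.2 h
      exact hblock_link u u' hub.1 hub.2 h1' h2'
    · have hub' : ¬(i ≤ (u' : ℕ) ∧ (u' : ℕ) < i + (m + 1)) := by
        intro hc
        exact hub ⟨(hcl u' u hc.1 hc.2 (p.iseqv.symm h)).1,
          (hcl u' u hc.1 hc.2 (p.iseqv.symm h)).2⟩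
      have hget : ∀ u : Fin (i + (m + 1) + j), ¬(i ≤ (u : ℕ) ∧ (u : ℕ) < i + (m + 1)) →
          ∃ t : Fin (i + j), (insMap (m := m) (Sum.inr t) : Pt 0 (i + (m + 1) + j))
            = Sum.inr u := by
        intro u hu0
        have hub2 := u.isLt
        rcases Nat.lt_or_ge (u : ℕ) i with hs | hs
        · exact ⟨⟨(u : ℕ), by omega⟩, by rw [insMap_inr]; simp [Fin.ext_iff, hs]⟩
        · have hs' : i + (m + 1) ≤ (u : ℕ) := by omega
          refine ⟨⟨(u : ℕ) - (m + 1), by omega⟩, ?_⟩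
          rw [insMap_inr]
          simp only [Sum.inr.injEq, Fin.ext_iff]
          rw [if_neg (show ¬((⟨(u : ℕ) - (m + 1), by omega⟩ : Fin (i + j)) : ℕ) < i by
            show ¬((u : ℕ) - (m + 1) < i); omega)]
          show (u : ℕ) - (m + 1) + (m + 1) = (u : ℕ)
          omega
      obtain ⟨t, ht⟩ := hget u hub
      obtain ⟨t', ht'⟩ := hget u' hub'
      show Relation.EqvGen _ (Sum.inr (Sum.inr u)) (Sum.inr (Sum.inr u'))
      have hgu : (Sum.inr (Sum.inr u) : X3 0 (i + j) (i + (m + 1) + j))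
          = remG (insMap (Sum.inr t)) := by rw [ht]; rfl
      have hgu' : (Sum.inr (Sum.inr u') : X3 0 (i + j) (i + (m + 1) + j))
          = remG (insMap (Sum.inr t')) := by rw [ht']; rfl
      rw [hgu, hgu']
      refine EqvGen.trans _ _ _ ((hlink t).symm _ _) (EqvGen.trans _ _ _ ?_ (hlink t'))
      refine jrel_up (p := q) (q := E) (a := Sum.inr t) (b := Sum.inr t') ?_
      show p.r (insMap (Sum.inr t)) (insMap (Sum.inr t'))
      rw [ht, ht']
      exact h
  refine Setoid.ext fun x y => ((eqvGen_iff_section _ p remF remG h1 h2 h3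
    (outEmb x) (outEmb y)).trans ?_)
  rcases x with z | u
  · exact z.elim0
  rcases y with z | u'
  · exact z.elim0
  exact Iff.rfl

end Aux6
section Aux7
open Relation

theorem genNC_cap : GenNC (⊤ : Setoid (Pt 2 0)) :=
  genNC_eq (GenNC.adj (genNC_topBlock 1)) adjPart_top

theorem genNC_relabel {k l k' l' : ℕ} (hk : k' = k) (hl : l' = l) {p : Setoid (Pt k l)}
    (h : GenNC (Setoid.comap (Sum.map (Fin.cast hk) (Fin.cast hl)) p)) : GenNC p := by
  subst hk; subst hl
  have e : Setoid.comap (Sum.map (Fin.cast rfl) (Fin.cast rfl)) p = p :=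
    Setoid.ext fun x y => by
      rcases x with a | a <;> rcases y with b | b <;> exact Iff.rfl
  rwa [e] at h

theorem genNC_aux : ∀ (N k l : ℕ), 2 * k + l ≤ N → ∀ p : Setoid (Pt k l),
    Noncrossing p → GenNC p := by
  intro N
  induction N with
  | zero =>
    intro k l hkl
    have hk0 : k = 0 := by omega
    have hl0 : l = 0 := by omega
    subst hk0; subst hl0
    intro p _
    exact genNC_empty p
  | succ N ih =>
    intro k l
    rcases k with _ | k
    · rcases l with _ | n
      · intro _ p _
        exact genNC_empty p
      · intro hkl p hp
        obtain ⟨lo, hi, hlohi, hhi, hblk0, hcl0⟩ := exists_interval_block p hp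
        obtain ⟨m, j, hn, hhi'⟩ : ∃ m j : ℕ,
            n + 1 = lo + (m + 1) + j ∧ hi = lo + m :=
          ⟨hi - lo, n - hi, by omega, by omega⟩
        set f : Pt 0 (lo + (m + 1) + j) → Pt 0 (n + 1) :=
          Sum.map (Fin.cast (rfl : 0 = 0)) (Fin.cast hn.symm) with hf
        set p' : Setoid (Pt 0 (lo + (m + 1) + j)) := Setoid.comap f p with hp'def
        have hp' : Noncrossing p' := by
          refine noncrossing_comap f (fun x y hxy => ?_) hp
          rcases x with a | t
          · exact a.elim0
          rcases y with b | u
          · exact b.elim0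
          have := t.isLt; have := u.isLt
          simp only [hf, Sum.map_inr, ptIdx, Sum.elim_inr, Fin.coe_cast] at hxy ⊢
          omega
        have hblk' : ∀ s t : Fin (lo + (m + 1) + j), lo ≤ (s : ℕ) → (s : ℕ) < lo + (m + 1) →
            lo ≤ (t : ℕ) → (t : ℕ) < lo + (m + 1) → p'.r (Sum.inr s) (Sum.inr t) := by
          intro s t h1 h2 h3 h4
          show p.r (f (Sum.inr s)) (f (Sum.inr t))
          exact hblk0 (Fin.cast hn.symm s) (Fin.cast hn.symm t)
            (by simp; omega) (by simp; omega) (by simp; omega) (by simp; omega)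
        have hcl' : ∀ s t : Fin (lo + (m + 1) + j), lo ≤ (s : ℕ) → (s : ℕ) < lo + (m + 1) →
            p'.r (Sum.inr s) (Sum.inr t) → lo ≤ (t : ℕ) ∧ (t : ℕ) < lo + (m + 1) := by
          intro s t h1 h2 hst
          have hres := hcl0 (Fin.cast hn.symm s) (Fin.cast hn.symm t)
            (by simp; omega) (by simp; omega) hst
          simp only [Fin.coe_cast] at hres
          omega
        have hgen_q : GenNC (Setoid.comap (insMap (m := m)) p') :=
          ih 0 (lo + j) (by omega) _ (noncrossing_insMap hp')
        have hcompose : GenNC p' :=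
          genNC_eq (GenNC.comp hgen_q
            (GenNC.tensor (GenNC.tensor (genNC_idPart lo) (genNC_topBlock m))
              (genNC_idPart j)))
            (interval_decomp p' hblk' hcl')
        exact genNC_relabel rfl hn.symm hcompose
    · intro hkl p hp
      exact genNC_eq
        (GenNC.comp
          (GenNC.tensor (ih k (l + 1) (by omega) (rotPart p) (noncrossing_rotPart hp))
            (genNC_idPart 1))
          (GenNC.tensor (genNC_idPart l) genNC_cap))
        (rot_decomp p)

end Aux7

/-- Every noncrossing partition is generated by the three elementary partitions
under tensor product, composition and reflection. -/
theorem noncrossing_generated {k l : ℕ} (p : Setoid (Pt k l)) (hp : Noncrossing p) :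
    GenNC p := by
  exact genNC_aux (2 * k + l) k l le_rfl p hp
end
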